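/- arXiv:math/0404239 — 11 statements merged into one kernel-verified Lean document; each statement's English description precedes it below -/
import Mathlib

section
/- Let A ⊆ B ⊆ C be finite graphs (each an induced subgraph of the next), let λ be an equivalence relation on C \ A, and suppose B is λ-closed (i.e., x ∈ B \ A implies x/λ ⊆ B). Then w_λ(A,C) = w_{λ↾(B\A)}(A,B) + w_{λ↾(C\B)}(B,C), and similarly v_λ(A,C) = v(A,B) + v(B,C) and e_λ(A,C) = e(A,B) + e(B,C). -/
namespace ZeroOneLaw

variable {V : Type*}

/-- `r` is an equivalence relation on the set `s` (and relates only elements of `s`). -/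
def IsEquivOn (r : V → V → Prop) (s : Set V) : Prop :=
  (∀ x ∈ s, r x x) ∧ (∀ ⦃x y⦄, r x y → r y x) ∧
    (∀ ⦃x y z⦄, r x y → r y z → r x z) ∧ (∀ ⦃x y⦄, r x y → x ∈ s ∧ y ∈ s)

/-- `C` is `r`-closed (a union of `r`-classes). -/
def RClosed (r : V → V → Prop) (C : Set V) : Prop :=
  ∀ ⦃x y⦄, x ∈ C → r x y → y ∈ C

/-- The restriction of the relation `r` to the set `C`. -/
def restrict (r : V → V → Prop) (C : Set V) : V → V → Prop :=
  fun x y => r x y ∧ x ∈ C ∧ y ∈ C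

/-- The number of equivalence classes of `r`, i.e. `v_λ(A,B)` when `r` is an
equivalence relation on `B \ A`. -/
noncomputable def numClasses (r : V → V → Prop) : ℕ :=
  Nat.card {t : Set V // ∃ x, r x x ∧ t = {y | r x y}}

/-- An edge of `B` that is neither contained in `A` nor contained in a single `r`-class:
these are the edges counted by `e_λ(A,B)`. -/
def BadEdge (G : SimpleGraph V) (A B : Set V) (r : V → V → Prop) (e : Sym2 V) : Prop :=
  e ∈ G.edgeSet ∧ (∀ v ∈ e, v ∈ B) ∧ ¬ (∀ v ∈ e, v ∈ A) ∧ ¬ ∃ x, ∀ v ∈ e, r x v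

/-- `e_λ(A,B)`. -/
noncomputable def numEdges (G : SimpleGraph V) (A B : Set V) (r : V → V → Prop) : ℕ :=
  Nat.card {e : Sym2 V // BadEdge G A B r e}

/-- The weight `w_λ(A,B) = v_λ(A,B) - α · e_λ(A,B)`. -/
noncomputable def weight (G : SimpleGraph V) (α : ℝ) (A B : Set V) (r : V → V → Prop) : ℝ :=
  (numClasses r : ℝ) - α * (numEdges G A B r : ℝ)

/-- `A <*_c B`. -/
def Ltc (G : SimpleGraph V) (α : ℝ) (A B : Set V) : Prop :=
  A ⊂ B ∧ ∀ r : V → V → Prop, IsEquivOn r (B \ A) → weight G α A B r < 0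

/-- `A ≤*_i B`. -/
def Lei (G : SimpleGraph V) (α : ℝ) (A B : Set V) : Prop :=
  A ⊆ B ∧ ∀ A' : Set V, A ⊆ A' → A' ⊂ B → Ltc G α A' B

/-- `A <*_i B`. -/
def Lti (G : SimpleGraph V) (α : ℝ) (A B : Set V) : Prop :=
  Lei G α A B ∧ A ≠ B

/-- `A ≤*_s B`. -/
def Les (G : SimpleGraph V) (α : ℝ) (A B : Set V) : Prop :=
  A ⊆ B ∧ ¬ ∃ A' : Set V, Lti G α A A' ∧ A' ⊆ B

/-- `A <*_s B`. -/
def Lts (G : SimpleGraph V) (α : ℝ) (A B : Set V) : Prop :=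
  Les G α A B ∧ A ≠ B

/-- `A <*_pr B`. -/
def Ltpr (G : SimpleGraph V) (α : ℝ) (A B : Set V) : Prop :=
  Lts G α A B ∧ ¬ ∃ C : Set V, Lts G α A C ∧ Lts G α C B

/-- `Ξ(A,B)`: the set of equivalence relations `λ` on `B \ A` such that every nonempty
`λ`-closed `C ⊆ B \ A` has `w_λ(A, A ∪ C) > 0`. -/
def Xi (G : SimpleGraph V) (α : ℝ) (A B : Set V) : Set (V → V → Prop) :=
  {r | IsEquivOn r (B \ A) ∧
    ∀ C ⊆ B \ A, C.Nonempty → RClosed r C → 0 < weight G α A (A ∪ C) (restrict r C)}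

/-- `ξ(A,B) = max {w_λ(A,B) : λ ∈ Ξ(A,B)}`. -/
noncomputable def xi (G : SimpleGraph V) (α : ℝ) (A B : Set V) : ℝ :=
  sSup {w : ℝ | ∃ r ∈ Xi G α A B, w = weight G α A B r}

theorem stmt1 {V : Type*} [Fintype V] (G : SimpleGraph V) (α : ℝ)
    (hirr : Irrational α) (h0 : 0 < α) (h1 : α < 1)
    (A B C : Set V) (hAB : A ⊆ B) (hBC : B ⊆ C)
    (r : V → V → Prop) (hr : IsEquivOn r (C \ A)) (hcl : RClosed r (B \ A)) :
    weight G α A C r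
        = weight G α A B (restrict r (B \ A)) + weight G α B C (restrict r (C \ B)) ∧
      numClasses r
        = numClasses (restrict r (B \ A)) + numClasses (restrict r (C \ B)) ∧
      numEdges G A C r
        = numEdges G A B (restrict r (B \ A)) + numEdges G B C (restrict r (C \ B)) := by

  obtain ⟨hrefl, hsym, htrans, hmem⟩ := hr
  -- if r x y and x ∈ B \ A then y ∈ B \ A
  have hsplit : ∀ x y, r x y → x ∈ B \ A → y ∈ B \ A := fun x y h hx => hcl hx h
  -- if r x y and x ∈ C \ B then y ∈ C \ B
  have hsplit' : ∀ x y, r x y → x ∈ C \ B → y ∈ C \ B := by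
    intro x y h hx
    have hy := (hmem h).2
    by_cases hyB : y ∈ B
    · exact absurd (hcl ⟨hyB, hy.2⟩ (hsym h)) (fun h' => hx.2 h'.1)
    · exact ⟨hy.1, hyB⟩
  -- classes split
  have hclasses : {t : Set V | ∃ x, r x x ∧ t = {y | r x y}}
      = {t | ∃ x, restrict r (B \ A) x x ∧ t = {y | restrict r (B \ A) x y}}
        ∪ {t | ∃ x, restrict r (C \ B) x x ∧ t = {y | restrict r (C \ B) x y}} := by
    ext t
    constructor
    · rintro ⟨x, hx, rfl⟩
      have hxCA := (hmem hx).1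
      by_cases hxB : x ∈ B
      · left
        refine ⟨x, ⟨hx, ⟨hxB, hxCA.2⟩, ⟨hxB, hxCA.2⟩⟩, ?_⟩
        ext y
        simp only [Set.mem_setOf_eq, restrict]
        exact ⟨fun h => ⟨h, ⟨hxB, hxCA.2⟩, hsplit x y h ⟨hxB, hxCA.2⟩⟩, fun h => h.1⟩
      · right
        refine ⟨x, ⟨hx, ⟨hxCA.1, hxB⟩, ⟨hxCA.1, hxB⟩⟩, ?_⟩
        ext y
        simp only [Set.mem_setOf_eq, restrict]
        exact ⟨fun h => ⟨h, ⟨hxCA.1, hxB⟩, hsplit' x y h ⟨hxCA.1, hxB⟩⟩, fun h => h.1⟩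
    · rintro (⟨x, hx, rfl⟩ | ⟨x, hx, rfl⟩)
      · refine ⟨x, hx.1, ?_⟩
        ext y
        simp only [Set.mem_setOf_eq, restrict]
        exact ⟨fun h => h.1, fun h => ⟨h, hx.2.1, hsplit x y h hx.2.1⟩⟩
      · refine ⟨x, hx.1, ?_⟩
        ext y
        simp only [Set.mem_setOf_eq, restrict]
        exact ⟨fun h => h.1, fun h => ⟨h, hx.2.1, hsplit' x y h hx.2.1⟩⟩
  have hclassdisj : Disjoint
      {t : Set V | ∃ x, restrict r (B \ A) x x ∧ t = {y | restrict r (B \ A) x y}}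
      {t : Set V | ∃ x, restrict r (C \ B) x x ∧ t = {y | restrict r (C \ B) x y}} := by
    rw [Set.disjoint_left]
    rintro t ⟨x, hx, rfl⟩ ⟨x', hx', heq⟩
    have hmemx : x ∈ {y | restrict r (B \ A) x y} := hx
    rw [heq] at hmemx
    exact hmemx.2.2.2 hx.2.1.1
  -- edges split
  have hedges : {e : Sym2 V | BadEdge G A C r e}
      = {e | BadEdge G A B (restrict r (B \ A)) e}
        ∪ {e | BadEdge G B C (restrict r (C \ B)) e} := by
    ext e
    constructor
    · rintro ⟨hE, hCv, hnA, hncl⟩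
      by_cases hB : ∀ v ∈ e, v ∈ B
      · exact Or.inl ⟨hE, hB, hnA, fun ⟨x, hx⟩ => hncl ⟨x, fun v hv => (hx v hv).1⟩⟩
      · refine Or.inr ⟨hE, hCv, hB, fun ⟨x, hx⟩ => hncl ⟨x, fun v hv => (hx v hv).1⟩⟩
    · rintro (⟨hE, hB, hnA, hn⟩ | ⟨hE, hCv, hnB, hn⟩)
      · refine ⟨hE, fun v hv => hBC (hB v hv), hnA, ?_⟩
        rintro ⟨x, hx⟩
        have hvBA : ∀ v ∈ e, v ∈ B \ A := fun v hv => ⟨hB v hv, ((hmem (hx v hv)).2).2⟩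
        obtain ⟨a, ha⟩ : ∃ a, a ∈ e := ⟨e.out.1, Sym2.out_fst_mem e⟩
        have hxBA : x ∈ B \ A := hsplit a x (hsym (hx a ha)) (hvBA a ha)
        exact hn ⟨x, fun v hv => ⟨hx v hv, hxBA, hvBA v hv⟩⟩
      · refine ⟨hE, hCv, fun hA => hnB (fun v hv => hAB (hA v hv)), ?_⟩
        rintro ⟨x, hx⟩
        push_neg at hnB
        obtain ⟨u, hu, huB⟩ := hnB
        have huCB : u ∈ C \ B := ⟨((hmem (hx u hu)).2).1, huB⟩
        have hxCB : x ∈ C \ B := hsplit' u x (hsym (hx u hu)) huCB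
        exact hn ⟨x, fun v hv => ⟨hx v hv, hxCB, hsplit' x v (hx v hv) hxCB⟩⟩
  have hedgedisj : Disjoint
      {e : Sym2 V | BadEdge G A B (restrict r (B \ A)) e}
      {e : Sym2 V | BadEdge G B C (restrict r (C \ B)) e} := by
    rw [Set.disjoint_left]
    rintro e ⟨_, hB, _, _⟩ ⟨_, _, hnB, _⟩
    exact hnB hB
  have hv : numClasses r
      = numClasses (restrict r (B \ A)) + numClasses (restrict r (C \ B)) := by
    have h1 : numClasses r = {t : Set V | ∃ x, r x x ∧ t = {y | r x y}}.ncard :=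
      Nat.card_coe_set_eq _
    have h2 : numClasses (restrict r (B \ A))
        = {t : Set V | ∃ x, restrict r (B \ A) x x
            ∧ t = {y | restrict r (B \ A) x y}}.ncard := Nat.card_coe_set_eq _
    have h3 : numClasses (restrict r (C \ B))
        = {t : Set V | ∃ x, restrict r (C \ B) x x
            ∧ t = {y | restrict r (C \ B) x y}}.ncard := Nat.card_coe_set_eq _
    rw [h1, h2, h3, hclasses, Set.ncard_union_eq hclassdisj (Set.toFinite _) (Set.toFinite _)]
  have he : numEdges G A C r
      = numEdges G A B (restrict r (B \ A)) + numEdges G B C (restrict r (C \ B)) := by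
    have h1 : numEdges G A C r = {e : Sym2 V | BadEdge G A C r e}.ncard :=
      Nat.card_coe_set_eq _
    have h2 : numEdges G A B (restrict r (B \ A))
        = {e : Sym2 V | BadEdge G A B (restrict r (B \ A)) e}.ncard :=
      Nat.card_coe_set_eq _
    have h3 : numEdges G B C (restrict r (C \ B))
        = {e : Sym2 V | BadEdge G B C (restrict r (C \ B)) e}.ncard :=
      Nat.card_coe_set_eq _
    rw [h1, h2, h3, hedges, Set.ncard_union_eq hedgedisj (Set.toFinite _) (Set.toFinite _)]
  refine ⟨?_, hv, he⟩
  unfold weight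
  rw [hv, he]
  push_cast
  ring

end ZeroOneLaw
end

section
/- Let A ⊆ B be finite graphs, λ an equivalence relation on B \ A, and D ⊆ B \ A. Let D⁺ = ⋃{x/λ : x ∈ D} be the λ-closure of D. Then D⁺ is λ-closed and w_{λ↾D⁺}(A, A∪D⁺) ≤ w_{λ↾D}(A, A∪D). -/
namespace ZeroOneLaw

variable {V : Type*}

theorem stmt2 {V : Type*} [Fintype V] (G : SimpleGraph V) (α : ℝ)
    (hirr : Irrational α) (h0 : 0 < α) (h1 : α < 1)
    (A B : Set V) (hAB : A ⊆ B) (r : V → V → Prop) (hr : IsEquivOn r (B \ A))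
    (D : Set V) (hD : D ⊆ B \ A) :
    RClosed r {y | ∃ x ∈ D, r x y} ∧
      weight G α A (A ∪ {y | ∃ x ∈ D, r x y}) (restrict r {y | ∃ x ∈ D, r x y})
        ≤ weight G α A (A ∪ D) (restrict r D) := by
  obtain ⟨hrefl, hsymm, htrans, hdom⟩ := hr
  set D' : Set V := {y | ∃ x ∈ D, r x y} with hD'def
  have hDD' : D ⊆ D' := fun x hx => ⟨x, hx, hrefl x (hD hx)⟩
  have hD'BA : D' ⊆ B \ A := fun y ⟨x, _, hxy⟩ => (hdom hxy).2
  constructor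
  · intro x y hx hxy
    obtain ⟨d, hd, hdx⟩ := hx
    exact ⟨d, hd, htrans hdx hxy⟩
  · -- numClasses inequality
    have hv : numClasses (restrict r D') ≤ numClasses (restrict r D) := by
      unfold numClasses
      have : ∀ t : {t : Set V // ∃ x, restrict r D' x x ∧ t = {y | restrict r D' x y}},
          ∃ x, restrict r D x x ∧ (t.1 ∩ D) = {y | restrict r D x y} := by
        rintro ⟨t, x, ⟨hrxx, hxD', -⟩, rfl⟩
        obtain ⟨d, hdD, hdx⟩ := hxD'
        refine ⟨d, ⟨hrefl d (hD hdD), hdD, hdD⟩, ?_⟩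
        ext y
        constructor
        · rintro ⟨⟨hxy, -, -⟩, hyD⟩
          exact ⟨htrans hdx hxy, hdD, hyD⟩
        · rintro ⟨hdy, -, hyD⟩
          exact ⟨⟨htrans (hsymm hdx) hdy, ⟨d, hdD, hdx⟩, hDD' hyD⟩, hyD⟩
      apply Nat.card_le_card_of_injective
        (fun t => (⟨t.1 ∩ D, this t⟩ : {t : Set V // ∃ x, restrict r D x x ∧
          t = {y | restrict r D x y}}))
      intro t₁ t₂ hEq
      have hset : t₁.1 ∩ D = t₂.1 ∩ D := congrArg Subtype.val hEq
      obtain ⟨x₁, ⟨hrx₁, hx₁D', -⟩, ht₁⟩ := t₁.2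
      obtain ⟨x₂, ⟨hrx₂, hx₂D', -⟩, ht₂⟩ := t₂.2
      have heq' : {y | restrict r D' x₁ y} ∩ D = {y | restrict r D' x₂ y} ∩ D := by
        rw [← ht₁, ← ht₂]; exact hset
      obtain ⟨d₁, hd₁D, hd₁x₁⟩ := id hx₁D'
      have hd₁mem : d₁ ∈ {y | restrict r D' x₁ y} ∩ D :=
        ⟨⟨hsymm hd₁x₁, hx₁D', hDD' hd₁D⟩, hd₁D⟩
      rw [heq'] at hd₁mem
      obtain ⟨⟨hx₂d₁, -, -⟩, -⟩ := hd₁mem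
      have hx₂x₁ : r x₂ x₁ := htrans hx₂d₁ hd₁x₁
      apply Subtype.ext
      rw [ht₁, ht₂]
      ext y
      constructor
      · rintro ⟨hx₁y, -, hyD'⟩
        exact ⟨htrans hx₂x₁ hx₁y, hx₂D', hyD'⟩
      · rintro ⟨hx₂y, -, hyD'⟩
        exact ⟨htrans (hsymm hx₂x₁) hx₂y, hx₁D', hyD'⟩
    -- numEdges inequality
    have he : numEdges G A (A ∪ D) (restrict r D) ≤ numEdges G A (A ∪ D') (restrict r D') := by
      unfold numEdges
      have : ∀ e : {e : Sym2 V // BadEdge G A (A ∪ D) (restrict r D) e},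
          BadEdge G A (A ∪ D') (restrict r D') e.1 := by
        rintro ⟨e, he1, he2, he3, he4⟩
        refine ⟨he1, fun v hv => ?_, he3, ?_⟩
        · rcases he2 v hv with h | h
          · exact Or.inl h
          · exact Or.inr (hDD' h)
        · rintro ⟨x, hx⟩
          have he3' := he3
          push_neg at he3'
          obtain ⟨v₀, hv₀e, -⟩ := he3'
          obtain ⟨-, hxD', -⟩ := hx v₀ hv₀e
          obtain ⟨d, hdD, hdx⟩ := hxD'
          refine he4 ⟨d, fun v hv => ?_⟩
          obtain ⟨hxv, -, hvD'⟩ := hx v hv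
          have hvD : v ∈ D := by
            rcases he2 v hv with h | h
            · exact absurd h (hD'BA hvD').2
            · exact h
          exact ⟨htrans hdx hxv, hdD, hvD⟩
      apply Nat.card_le_card_of_injective (fun e => (⟨e.1, this e⟩ :
        {e : Sym2 V // BadEdge G A (A ∪ D') (restrict r D') e}))
      intro e₁ e₂ hEq
      exact Subtype.ext (congrArg (fun z : {e : Sym2 V // BadEdge G A (A ∪ D') (restrict r D') e} => z.1) hEq)
    unfold weight
    have hv' : (numClasses (restrict r D') : ℝ) ≤ numClasses (restrict r D) :=
      Nat.cast_le.mpr hv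
    have he' : α * (numEdges G A (A ∪ D) (restrict r D) : ℝ)
        ≤ α * (numEdges G A (A ∪ D') (restrict r D') : ℝ) :=
      mul_le_mul_of_nonneg_left (Nat.cast_le.mpr he) h0.le
    linarith

end ZeroOneLaw
end

section
/- Suppose A is a proper induced subgraph of a finite graph B, λ is an equivalence relation on B \ A, and w_λ(A,B) > 0. Then there exists A'' with A ⊆ A'' ⊊ B such that A'' \ A is λ-closed, w_λ(A'',B) > 0, and for every λ-closed C ⊆ B \ A'' with C ∉ {∅, B \ A''} one has w_λ(A'', A''∪C) > 0 and w_λ(A''∪C, B) < 0. -/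
namespace ZeroOneLaw

variable {V : Type*}

section Aux

theorem restrict_eq_self {r : V → V → Prop} {s : Set V} (hr : IsEquivOn r s) :
    restrict r s = r := by
  funext x y
  apply propext
  constructor
  · exact fun h => h.1
  · exact fun h => ⟨h, (hr.2.2.2 h).1, (hr.2.2.2 h).2⟩

theorem numClasses_eq_ncard (s : V → V → Prop) :
    numClasses s = Set.ncard {t : Set V | ∃ x, s x x ∧ t = {y | s x y}} := rfl

theorem numEdges_eq_ncard (G : SimpleGraph V) (A B : Set V) (s : V → V → Prop) :
    numEdges G A B s = Set.ncard {e : Sym2 V | BadEdge G A B s e} := rfl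

theorem numClasses_add [Finite V] {r : V → V → Prop} {C D : Set V}
    (hCD : Disjoint C D) (hCcl : RClosed r C) (hDcl : RClosed r D) :
    numClasses (restrict r (C ∪ D)) = numClasses (restrict r C) + numClasses (restrict r D) := by
  have hK : {t : Set V | ∃ x, restrict r (C ∪ D) x x ∧ t = {y | restrict r (C ∪ D) x y}}
      = {t : Set V | ∃ x, restrict r C x x ∧ t = {y | restrict r C x y}} ∪
        {t : Set V | ∃ x, restrict r D x x ∧ t = {y | restrict r D x y}} := by
    ext t
    constructor
    · rintro ⟨x, ⟨hxx, hxS, -⟩, rfl⟩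
      rcases hxS with hxC | hxD
      · left
        refine ⟨x, ⟨hxx, hxC, hxC⟩, ?_⟩
        ext y
        simp only [restrict, Set.mem_setOf_eq, Set.mem_union]
        constructor
        · rintro ⟨hxy, -, -⟩
          exact ⟨hxy, hxC, hCcl hxC hxy⟩
        · rintro ⟨hxy, -, hyC⟩
          exact ⟨hxy, Or.inl hxC, Or.inl hyC⟩
      · right
        refine ⟨x, ⟨hxx, hxD, hxD⟩, ?_⟩
        ext y
        simp only [restrict, Set.mem_setOf_eq, Set.mem_union]
        constructor
        · rintro ⟨hxy, -, -⟩
          exact ⟨hxy, hxD, hDcl hxD hxy⟩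
        · rintro ⟨hxy, -, hyD⟩
          exact ⟨hxy, Or.inr hxD, Or.inr hyD⟩
    · rintro (⟨x, ⟨hxx, hxC, -⟩, rfl⟩ | ⟨x, ⟨hxx, hxD, -⟩, rfl⟩)
      · refine ⟨x, ⟨hxx, Or.inl hxC, Or.inl hxC⟩, ?_⟩
        ext y
        simp only [restrict, Set.mem_setOf_eq, Set.mem_union]
        constructor
        · rintro ⟨hxy, -, hyC⟩
          exact ⟨hxy, Or.inl hxC, Or.inl hyC⟩
        · rintro ⟨hxy, -, -⟩
          exact ⟨hxy, hxC, hCcl hxC hxy⟩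
      · refine ⟨x, ⟨hxx, Or.inr hxD, Or.inr hxD⟩, ?_⟩
        ext y
        simp only [restrict, Set.mem_setOf_eq, Set.mem_union]
        constructor
        · rintro ⟨hxy, -, hyD⟩
          exact ⟨hxy, Or.inr hxD, Or.inr hyD⟩
        · rintro ⟨hxy, -, -⟩
          exact ⟨hxy, hxD, hDcl hxD hxy⟩
  have hdisj : Disjoint {t : Set V | ∃ x, restrict r C x x ∧ t = {y | restrict r C x y}}
      {t : Set V | ∃ x, restrict r D x x ∧ t = {y | restrict r D x y}} := by
    rw [Set.disjoint_left]
    rintro t ⟨x, ⟨hxx, hxC, -⟩, rfl⟩ ⟨y, ⟨hyy, hyD, -⟩, ht⟩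
    have hx : x ∈ {z | restrict r C x z} := ⟨hxx, hxC, hxC⟩
    rw [ht] at hx
    exact hCD.ne_of_mem hxC hx.2.2 rfl
  rw [numClasses_eq_ncard, numClasses_eq_ncard, numClasses_eq_ncard, hK,
    Set.ncard_union_eq hdisj (Set.toFinite _) (Set.toFinite _)]

theorem badEdge_iff {G : SimpleGraph V} {A'' B C : Set V} {r : V → V → Prop}
    (hsymm : ∀ ⦃x y⦄, r x y → r y x) (htr : ∀ ⦃x y z⦄, r x y → r y z → r x z)
    (hA''B : A'' ⊆ B) (hC : C ⊆ B \ A'')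
    (hCcl : RClosed r C) (e : Sym2 V) :
    BadEdge G A'' B (restrict r (B \ A'')) e ↔
      BadEdge G A'' (A'' ∪ C) (restrict r C) e ∨
        BadEdge G (A'' ∪ C) B (restrict r ((B \ A'') \ C)) e := by
  induction e using Sym2.ind with
  | _ a b =>
  have ha : a ∈ s(a, b) := Sym2.mem_mk_left a b
  constructor
  · rintro ⟨hE, hB, hA, hcls⟩
    by_cases hsub : ∀ v ∈ s(a, b), v ∈ A'' ∪ C
    · left
      refine ⟨hE, hsub, hA, ?_⟩
      rintro ⟨x, hx⟩
      exact hcls ⟨x, fun v hv => ⟨(hx v hv).1, hC (hx v hv).2.1, hC (hx v hv).2.2⟩⟩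
    · right
      refine ⟨hE, hB, hsub, ?_⟩
      rintro ⟨x, hx⟩
      exact hcls ⟨x, fun v hv => ⟨(hx v hv).1, (hx v hv).2.1.1, (hx v hv).2.2.1⟩⟩
  · rintro (⟨hE, hsub, hA, hcls⟩ | ⟨hE, hB, hnsub, hcls⟩)
    · refine ⟨hE, fun v hv => ?_, hA, ?_⟩
      · rcases hsub v hv with h | h
        · exact hA''B h
        · exact (hC h).1
      · rintro ⟨x, hx⟩
        apply hcls
        have haC : a ∈ C := by
          rcases hsub a ha with h | h
          · exact absurd h (hx a ha).2.2.2
          · exact h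
        have hxC : x ∈ C := hCcl haC (hsymm (hx a ha).1)
        refine ⟨x, fun v hv => ⟨(hx v hv).1, hxC, ?_⟩⟩
        rcases hsub v hv with h | h
        · exact absurd h (hx v hv).2.2.2
        · exact h
    · refine ⟨hE, hB, fun h => hnsub (fun v hv => Or.inl (h v hv)), ?_⟩
      rintro ⟨x, hx⟩
      apply hcls
      push_neg at hnsub
      obtain ⟨v₀, hv₀e, hv₀⟩ := hnsub
      have hv₀S : v₀ ∈ B \ A'' := (hx v₀ hv₀e).2.2
      have hv₀C : v₀ ∉ C := fun h => hv₀ (Or.inr h)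
      refine ⟨v₀, fun v hv => ?_⟩
      have hrv : r v₀ v := htr (hsymm (hx v₀ hv₀e).1) (hx v hv).1
      refine ⟨hrv, ⟨hv₀S, hv₀C⟩, (hx v hv).2.2, fun hvC => hv₀C (hCcl hvC (hsymm hrv))⟩

theorem weight_add [Finite V] (G : SimpleGraph V) (α : ℝ) {A A'' B C : Set V}
    {r : V → V → Prop}
    (hr : IsEquivOn r (B \ A)) (hAA'' : A ⊆ A'') (hA''B : A'' ⊆ B)
    (hcl : RClosed r (A'' \ A)) (hC : C ⊆ B \ A'') (hCcl : RClosed r C) :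
    weight G α A'' B (restrict r (B \ A'')) =
      weight G α A'' (A'' ∪ C) (restrict r C) +
        weight G α (A'' ∪ C) B (restrict r (B \ (A'' ∪ C))) := by
  have hScl : RClosed r (B \ A'') := by
    intro x y hx hxy
    have hy : y ∈ B \ A := (hr.2.2.2 hxy).2
    exact ⟨hy.1, fun hyA'' => hx.2 (hcl ⟨hyA'', hy.2⟩ (hr.2.1 hxy)).1⟩
  have hDcl : RClosed r ((B \ A'') \ C) := fun x y hx hxy =>
    ⟨hScl hx.1 hxy, fun hyC => hx.2 (hCcl hyC (hr.2.1 hxy))⟩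
  have hU : C ∪ ((B \ A'') \ C) = B \ A'' := Set.union_diff_cancel hC
  have hclasses := numClasses_add (r := r) (Set.disjoint_sdiff_right) hCcl hDcl
  rw [hU] at hclasses
  have hedges : numEdges G A'' B (restrict r (B \ A'')) =
      numEdges G A'' (A'' ∪ C) (restrict r C) +
        numEdges G (A'' ∪ C) B (restrict r ((B \ A'') \ C)) := by
    rw [numEdges_eq_ncard, numEdges_eq_ncard, numEdges_eq_ncard]
    have hset : {e : Sym2 V | BadEdge G A'' B (restrict r (B \ A'')) e} =
        {e : Sym2 V | BadEdge G A'' (A'' ∪ C) (restrict r C) e} ∪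
          {e : Sym2 V | BadEdge G (A'' ∪ C) B (restrict r ((B \ A'') \ C)) e} := by
      ext e
      exact badEdge_iff hr.2.1 hr.2.2.1 hA''B hC hCcl e
    have hdisj : Disjoint {e : Sym2 V | BadEdge G A'' (A'' ∪ C) (restrict r C) e}
        {e : Sym2 V | BadEdge G (A'' ∪ C) B (restrict r ((B \ A'') \ C)) e} :=
      Set.disjoint_left.2 fun e h1 h2 => h2.2.2.1 h1.2.1
    rw [hset, Set.ncard_union_eq hdisj (Set.toFinite _) (Set.toFinite _)]
  rw [← Set.diff_diff]
  unfold weight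
  rw [hclasses, hedges]
  push_cast
  ring

theorem weight_ne_zero [Finite V] {G : SimpleGraph V} (α : ℝ) (hirr : Irrational α)
    {X Y : Set V} {s : V → V → Prop} (hne : ∃ x, s x x) :
    weight G α X Y s ≠ 0 := by
  have h1 : 0 < numClasses s := by
    have : Nonempty {t : Set V // ∃ x, s x x ∧ t = {y | s x y}} := by
      obtain ⟨x, hx⟩ := hne
      exact ⟨⟨{y | s x y}, x, hx, rfl⟩⟩
    exact Nat.card_pos
  intro h
  unfold weight at h
  rcases Nat.eq_zero_or_pos (numEdges G X Y s) with hm | hm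
  · rw [hm] at h
    simp only [Nat.cast_zero, mul_zero, sub_zero, Nat.cast_eq_zero] at h
    omega
  · apply hirr
    refine ⟨(numClasses s : ℚ) / (numEdges G X Y s : ℚ), ?_⟩
    have hm' : ((numEdges G X Y s : ℕ) : ℝ) ≠ 0 := Nat.cast_ne_zero.2 hm.ne'
    push_cast
    field_simp
    linarith

end Aux

theorem stmt3 {V : Type*} [Fintype V] (G : SimpleGraph V) (α : ℝ)
    (hirr : Irrational α) (h0 : 0 < α) (h1 : α < 1)
    (A B : Set V) (hAB : A ⊂ B) (r : V → V → Prop) (hr : IsEquivOn r (B \ A))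
    (hw : 0 < weight G α A B r) :
    ∃ A'' : Set V, A ⊆ A'' ∧ A'' ⊂ B ∧ RClosed r (A'' \ A) ∧
      0 < weight G α A'' B (restrict r (B \ A'')) ∧
      ∀ C ⊆ B \ A'', C.Nonempty → C ≠ B \ A'' → RClosed r C →
        0 < weight G α A'' (A'' ∪ C) (restrict r C) ∧
          weight G α (A'' ∪ C) B (restrict r (B \ (A'' ∪ C))) < 0 := by
  classical
  have hA𝒮 : A ∈ {X : Set V | A ⊆ X ∧ X ⊂ B ∧ RClosed r (X \ A) ∧
      0 < weight G α X B (restrict r (B \ X))} := by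
    refine ⟨subset_rfl, hAB, fun x y hx _ => absurd hx.1 hx.2, ?_⟩
    rwa [restrict_eq_self hr]
  obtain ⟨A'', hA''𝒮, hmax⟩ := Set.Finite.exists_maximalFor Set.ncard
    {X : Set V | A ⊆ X ∧ X ⊂ B ∧ RClosed r (X \ A) ∧
      0 < weight G α X B (restrict r (B \ X))} (Set.toFinite _) ⟨A, hA𝒮⟩
  obtain ⟨hAA'', hssub, hcl, hwA''⟩ := hA''𝒮
  refine ⟨A'', hAA'', hssub, hcl, hwA'', ?_⟩
  intro C hC hCne hCneq hCcl
  obtain ⟨z, hzS, hzC⟩ := Set.exists_of_ssubset (hC.ssubset_of_ne hCneq)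
  have hz2 : z ∈ B \ (A'' ∪ C) := ⟨hzS.1, fun h => h.elim hzS.2 hzC⟩
  have hzBA : z ∈ B \ A := ⟨hzS.1, fun h => hzS.2 (hAA'' h)⟩
  have hadd := weight_add G α hr hAA'' hssub.subset hcl hC hCcl
  have hne0 : weight G α (A'' ∪ C) B (restrict r (B \ (A'' ∪ C))) ≠ 0 :=
    weight_ne_zero α hirr ⟨z, hr.1 z hzBA, hz2, hz2⟩
  have hnotpos : ¬ 0 < weight G α (A'' ∪ C) B (restrict r (B \ (A'' ∪ C))) := by
    intro hpos
    have hmem : A'' ∪ C ∈ {X : Set V | A ⊆ X ∧ X ⊂ B ∧ RClosed r (X \ A) ∧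
        0 < weight G α X B (restrict r (B \ X))} := by
      refine ⟨hAA''.trans Set.subset_union_left, ?_, ?_, hpos⟩
      · refine ⟨Set.union_subset hssub.subset (fun x hx => (hC hx).1), fun hBs => ?_⟩
        exact hz2.2 (hBs hz2.1)
      · intro x y hx hxy
        rcases hx.1 with hxA'' | hxC
        · have h := hcl ⟨hxA'', hx.2⟩ hxy
          exact ⟨Or.inl h.1, h.2⟩
        · have hyC := hCcl hxC hxy
          exact ⟨Or.inr hyC, fun hyA => (hC hyC).2 (hAA'' hyA)⟩
    have hdisjAC : Disjoint A'' C := Set.disjoint_left.2 fun a haA haC => (hC haC).2 haA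
    have hlt : A''.ncard < (A'' ∪ C).ncard := by
      rw [Set.ncard_union_eq hdisjAC (Set.toFinite _) (Set.toFinite _)]
      have hCpos : 0 < C.ncard := (Set.ncard_pos (Set.toFinite C)).2 hCne
      omega
    exact absurd (hmax hmem hlt.le) (not_le.2 hlt)
  have hneg : weight G α (A'' ∪ C) B (restrict r (B \ (A'' ∪ C))) < 0 :=
    lt_of_le_of_ne (not_lt.1 hnotpos) hne0
  constructor
  · linarith [hadd ▸ hwA'']
  · exact hneg

end ZeroOneLaw
end

section
/- For finite graphs A ⊆ B: A ≤*_s B if and only if either A = B or there exists an equivalence relation λ on B \ A such that for every nonempty λ-closed C ⊆ B \ A one has w_{λ↾C}(A, A∪C) > 0 (in particular w_λ(A,B) > 0). -/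
namespace ZeroOneLaw

variable {V : Type*}

/-! Helpers -/

lemma class_eq {r : V → V → Prop} (hsym : ∀ ⦃a b⦄, r a b → r b a)
    (htrans : ∀ ⦃a b c⦄, r a b → r b c → r a c) {x y : V} (hxy : r x y) :
    {z | r x z} = {z | r y z} :=
  Set.ext fun z => ⟨fun h => htrans (hsym hxy) h, fun h => htrans hxy h⟩

lemma numClasses_pos [Finite V] {r : V → V → Prop} (h : ∃ x, r x x) :
    0 < numClasses r := by
  obtain ⟨x, hx⟩ := h
  have : Nonempty {t : Set V // ∃ x, r x x ∧ t = {y | r x y}} := ⟨⟨{y | r x y}, x, hx, rfl⟩⟩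
  exact Nat.card_pos

lemma numClasses_eq_zero {r : V → V → Prop} (h : ∀ x, ¬ r x x) : numClasses r = 0 := by
  have : IsEmpty {t : Set V // ∃ x, r x x ∧ t = {y | r x y}} :=
    ⟨by rintro ⟨t, x, hx, _⟩; exact h x hx⟩
  exact Nat.card_of_isEmpty

lemma numEdges_eq_zero {G : SimpleGraph V} {A B : Set V} {r : V → V → Prop}
    (h : B ⊆ A) : numEdges G A B r = 0 := by
  have : IsEmpty {e : Sym2 V // BadEdge G A B r e} :=
    ⟨by rintro ⟨e, _, hB, hA, _⟩; exact hA fun v hv => h (hB v hv)⟩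
  exact Nat.card_of_isEmpty

lemma numClasses_mono [Finite V] {r r' : V → V → Prop}
    (hsym : ∀ ⦃a b⦄, r a b → r b a) (htrans : ∀ ⦃a b c⦄, r a b → r b c → r a c)
    (F : ∀ x, r x x → V)
    (hF : ∀ x hx, r' (F x hx) (F x hx))
    (hinj : ∀ x hx y hy, r' (F x hx) (F y hy) → r x y) :
    numClasses r ≤ numClasses r' := by
  classical
  refine Nat.card_le_card_of_injective
    (fun p : {t : Set V // ∃ x, r x x ∧ t = {y | r x y}} =>
      (⟨{y | r' (F p.2.choose p.2.choose_spec.1) y},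
        F p.2.choose p.2.choose_spec.1, hF _ _, rfl⟩ :
        {t : Set V // ∃ x, r' x x ∧ t = {y | r' x y}})) ?_
  intro a b h
  simp only [Subtype.mk.injEq] at h
  have hmem : r' (F a.2.choose a.2.choose_spec.1) (F b.2.choose b.2.choose_spec.1) := by
    have : F b.2.choose b.2.choose_spec.1 ∈
        {y | r' (F b.2.choose b.2.choose_spec.1) y} := hF _ _
    rw [← h] at this
    exact this
  have hr : r a.2.choose b.2.choose := hinj _ _ _ _ hmem
  have : a.1 = b.1 := by
    rw [a.2.choose_spec.2, b.2.choose_spec.2]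
    exact class_eq hsym htrans hr
  exact Subtype.ext this

lemma numClasses_le_add [Finite V] {r p q : V → V → Prop}
    (hsplit : ∀ x, r x x → p x x ∨ q x x)
    (hpr : ∀ ⦃a b⦄, p a b → r a b) (hqr : ∀ ⦃a b⦄, q a b → r a b)
    (hsym : ∀ ⦃a b⦄, r a b → r b a) (htrans : ∀ ⦃a b c⦄, r a b → r b c → r a c) :
    numClasses r ≤ numClasses p + numClasses q := by
  classical
  simp only [numClasses, numEdges]; rw [← Nat.card_sum]
  refine Nat.card_le_card_of_injective
    (fun P : {t : Set V // ∃ x, r x x ∧ t = {y | r x y}} =>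
      if h : p P.2.choose P.2.choose then
        Sum.inl (⟨{y | p P.2.choose y}, P.2.choose, h, rfl⟩ :
          {t : Set V // ∃ x, p x x ∧ t = {y | p x y}})
      else
        Sum.inr (⟨{y | q P.2.choose y}, P.2.choose,
          (hsplit _ P.2.choose_spec.1).resolve_left h, rfl⟩ :
          {t : Set V // ∃ x, q x x ∧ t = {y | q x y}})) ?_
  intro a b hab
  by_cases ha : p a.2.choose a.2.choose <;> by_cases hb : p b.2.choose b.2.choose <;>
    simp only [ha, hb, dif_pos, dif_neg, not_false_iff, Sum.inl.injEq, Sum.inr.injEq,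
      Subtype.mk.injEq, reduceCtorEq] at hab
  · have hmem : p a.2.choose b.2.choose := by
      have : b.2.choose ∈ {y | p b.2.choose y} := hb
      rw [← hab] at this; exact this
    refine Subtype.ext ?_
    rw [a.2.choose_spec.2, b.2.choose_spec.2]
    exact class_eq hsym htrans (hpr hmem)
  · have hmem : q a.2.choose b.2.choose := by
      have : b.2.choose ∈ {y | q b.2.choose y} :=
        (hsplit _ b.2.choose_spec.1).resolve_left hb
      rw [← hab] at this; exact this
    refine Subtype.ext ?_
    rw [a.2.choose_spec.2, b.2.choose_spec.2]
    exact class_eq hsym htrans (hqr hmem)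

lemma add_numClasses_le [Finite V] {r p q : V → V → Prop}
    (hpr : ∀ ⦃a b⦄, p a b → r a b) (hqr : ∀ ⦃a b⦄, q a b → r a b)
    (hpsym : ∀ ⦃a b⦄, p a b → p b a) (hptrans : ∀ ⦃a b c⦄, p a b → p b c → p a c)
    (hqsym : ∀ ⦃a b⦄, q a b → q b a) (hqtrans : ∀ ⦃a b c⦄, q a b → q b c → q a c)
    (hp : ∀ ⦃x y⦄, p x x → p y y → r x y → p x y)
    (hq : ∀ ⦃x y⦄, q x x → q y y → r x y → q x y)
    (hpq : ∀ ⦃x y⦄, p x x → q y y → ¬ r x y) :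
    numClasses p + numClasses q ≤ numClasses r := by
  classical
  simp only [numClasses, numEdges]; rw [← Nat.card_sum]
  refine Nat.card_le_card_of_injective
    (fun P : {t : Set V // ∃ x, p x x ∧ t = {y | p x y}} ⊕
        {t : Set V // ∃ x, q x x ∧ t = {y | q x y}} =>
      (match P with
      | Sum.inl a => ⟨{y | r a.2.choose y}, a.2.choose, hpr a.2.choose_spec.1, rfl⟩
      | Sum.inr b => ⟨{y | r b.2.choose y}, b.2.choose, hqr b.2.choose_spec.1, rfl⟩ :
        {t : Set V // ∃ x, r x x ∧ t = {y | r x y}})) ?_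
  rintro (a | a) (b | b) hab <;>
    simp only [Subtype.mk.injEq] at hab
  · have hmem : r a.2.choose b.2.choose := by
      have : b.2.choose ∈ {y | r b.2.choose y} := hpr b.2.choose_spec.1
      rw [← hab] at this; exact this
    have := hp a.2.choose_spec.1 b.2.choose_spec.1 hmem
    refine congrArg Sum.inl (Subtype.ext ?_)
    rw [a.2.choose_spec.2, b.2.choose_spec.2]
    exact class_eq hpsym hptrans this
  · exfalso
    have hmem : r a.2.choose b.2.choose := by
      have : b.2.choose ∈ {y | r b.2.choose y} := hqr b.2.choose_spec.1
      rw [← hab] at this; exact this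
    exact hpq a.2.choose_spec.1 b.2.choose_spec.1 hmem
  · exfalso
    have hmem : r b.2.choose a.2.choose := by
      have : a.2.choose ∈ {y | r a.2.choose y} := hqr a.2.choose_spec.1
      rw [hab] at this; exact this
    exact hpq b.2.choose_spec.1 a.2.choose_spec.1 hmem
  · have hmem : r a.2.choose b.2.choose := by
      have : b.2.choose ∈ {y | r b.2.choose y} := hqr b.2.choose_spec.1
      rw [← hab] at this; exact this
    have := hq a.2.choose_spec.1 b.2.choose_spec.1 hmem
    refine congrArg Sum.inr (Subtype.ext ?_)
    rw [a.2.choose_spec.2, b.2.choose_spec.2]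
    exact class_eq hqsym hqtrans this

lemma numEdges_le_of_imp [Finite V] {G : SimpleGraph V} {A B A' B' : Set V}
    {r r' : V → V → Prop}
    (h : ∀ e, BadEdge G A B r e → BadEdge G A' B' r' e) :
    numEdges G A B r ≤ numEdges G A' B' r' :=
  Nat.card_le_card_of_injective (fun e => ⟨e.1, h e.1 e.2⟩)
    (fun a b hab => Subtype.ext (Subtype.mk_eq_mk.mp hab))

lemma numEdges_le_add [Finite V] {G : SimpleGraph V}
    {A B A₁ B₁ A₂ B₂ : Set V} {r r₁ r₂ : V → V → Prop}
    (h₁ : ∀ e, BadEdge G A B r e → (∀ v ∈ e, v ∈ B₁) → BadEdge G A₁ B₁ r₁ e)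
    (h₂ : ∀ e, BadEdge G A B r e → ¬ (∀ v ∈ e, v ∈ B₁) → BadEdge G A₂ B₂ r₂ e) :
    numEdges G A B r ≤ numEdges G A₁ B₁ r₁ + numEdges G A₂ B₂ r₂ := by
  classical
  simp only [numClasses, numEdges]; rw [← Nat.card_sum]
  refine Nat.card_le_card_of_injective
    (fun e : {e : Sym2 V // BadEdge G A B r e} =>
      if h : ∀ v ∈ e.1, v ∈ B₁ then
        Sum.inl (⟨e.1, h₁ e.1 e.2 h⟩ : {e : Sym2 V // BadEdge G A₁ B₁ r₁ e})
      else Sum.inr (⟨e.1, h₂ e.1 e.2 h⟩ : {e : Sym2 V // BadEdge G A₂ B₂ r₂ e})) ?_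
  intro a b hab
  simp only at hab
  split_ifs at hab
  all_goals first
    | exact Subtype.ext (Subtype.mk_eq_mk.mp (Sum.inl.inj hab))
    | exact Subtype.ext (Subtype.mk_eq_mk.mp (Sum.inr.inj hab))
    | exact absurd hab (by simp)

lemma add_numEdges_le [Finite V] {G : SimpleGraph V}
    {A B A₁ B₁ A₂ B₂ : Set V} {r r₁ r₂ : V → V → Prop}
    (h₁ : ∀ e, BadEdge G A₁ B₁ r₁ e → BadEdge G A B r e)
    (h₂ : ∀ e, BadEdge G A₂ B₂ r₂ e → BadEdge G A B r e)
    (hdisj : ∀ e, BadEdge G A₁ B₁ r₁ e → BadEdge G A₂ B₂ r₂ e → False) :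
    numEdges G A₁ B₁ r₁ + numEdges G A₂ B₂ r₂ ≤ numEdges G A B r := by
  classical
  simp only [numClasses, numEdges]; rw [← Nat.card_sum]
  refine Nat.card_le_card_of_injective
    (fun P : {e : Sym2 V // BadEdge G A₁ B₁ r₁ e} ⊕ {e : Sym2 V // BadEdge G A₂ B₂ r₂ e} =>
      (match P with
      | Sum.inl a => ⟨a.1, h₁ a.1 a.2⟩
      | Sum.inr b => ⟨b.1, h₂ b.1 b.2⟩ : {e : Sym2 V // BadEdge G A B r e})) ?_
  rintro (a | a) (b | b) hab <;> simp only [Subtype.mk.injEq] at hab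
  · exact congrArg Sum.inl (Subtype.ext hab)
  · exact absurd (hab ▸ a.2) (fun h => hdisj _ h b.2)
  · exact absurd (hab ▸ a.2) (fun h => hdisj _ b.2 h)
  · exact congrArg Sum.inr (Subtype.ext hab)

lemma weight_pos_of_nonneg {G : SimpleGraph V} {α : ℝ} {A B : Set V} {r : V → V → Prop}
    (hirr : Irrational α) (hcls : 0 < numClasses r)
    (h : 0 ≤ weight G α A B r) : 0 < weight G α A B r := by
  rcases h.lt_or_eq with h' | h'
  · exact h'
  · exfalso
    have hw : (numClasses r : ℝ) = α * (numEdges G A B r : ℝ) := by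
      unfold weight at h'; linarith
    rcases Nat.eq_zero_or_pos (numEdges G A B r) with hm | hm
    · rw [hm] at hw
      simp at hw
      omega
    · refine hirr ⟨(numClasses r : ℚ) / (numEdges G A B r : ℚ), ?_⟩
      have hne : ((numEdges G A B r : ℚ) : ℝ) ≠ 0 := by
        push_cast
        exact_mod_cast Nat.cast_ne_zero.mpr hm.ne'
      push_cast
      rw [div_eq_iff (by exact_mod_cast hm.ne')]
      push_cast at hw ⊢
      linarith [hw]


lemma xi_to_les [Finite V] (G : SimpleGraph V) (α : ℝ) (h0 : 0 < α)
    {A B : Set V} (hAB : A ⊆ B)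
    {r : V → V → Prop} (hEq : IsEquivOn r (B \ A))
    (hXi : ∀ C ⊆ B \ A, C.Nonempty → RClosed r C →
      0 < weight G α A (A ∪ C) (restrict r C)) :
    Les G α A B := by
  obtain ⟨hrefl, hsym, htrans, hdom⟩ := hEq
  refine ⟨hAB, ?_⟩
  rintro ⟨A', ⟨⟨hAA', hLei⟩, hne⟩, hA'B⟩
  have hss : A ⊂ A' := hAA'.ssubset_of_ne hne
  have hltc := hLei A subset_rfl hss
  set D := A' \ A with hD
  set Cl : Set V := {y | ∃ x ∈ D, r x y} with hCldef
  have hDsub : D ⊆ B \ A := fun x hx => ⟨hA'B hx.1, hx.2⟩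
  have hDC : D ⊆ Cl := fun d hd => ⟨d, hd, hrefl d (hDsub hd)⟩
  have hClsub : Cl ⊆ B \ A := by rintro y ⟨x, hx, hxy⟩; exact (hdom hxy).2
  have hClclosed : RClosed r Cl := by
    rintro x y ⟨d, hd, hdx⟩ hxy; exact ⟨d, hd, htrans hdx hxy⟩
  obtain ⟨d₀, hd₀B, hd₀⟩ := Set.exists_of_ssubset hss
  have hd₀D : d₀ ∈ D := ⟨hd₀B, hd₀⟩
  have hpos := hXi Cl hClsub ⟨d₀, hDC hd₀D⟩ hClclosed
  have hμ : IsEquivOn (restrict r D) (A' \ A) := by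
    refine ⟨fun x hx => ⟨hrefl x (hDsub hx), hx, hx⟩, ?_, ?_, ?_⟩
    · rintro x y ⟨h1, h2, h3⟩; exact ⟨hsym h1, h3, h2⟩
    · rintro x y z ⟨h1, h2, h3⟩ ⟨h4, h5, h6⟩; exact ⟨htrans h1 h4, h2, h6⟩
    · rintro x y ⟨h1, h2, h3⟩; exact ⟨h2, h3⟩
  have hneg := hltc.2 (restrict r D) hμ
  have hcls : numClasses (restrict r Cl) ≤ numClasses (restrict r D) := by
    refine numClasses_mono ?_ ?_
      (fun x hx => hx.2.1.choose)
      (fun x hx => ?_) (fun x hx y hy h => ?_)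
    · rintro a b ⟨h1, h2, h3⟩; exact ⟨hsym h1, h3, h2⟩
    · rintro a b c ⟨h1, h2, h3⟩ ⟨h4, h5, h6⟩; exact ⟨htrans h1 h4, h2, h6⟩
    · obtain ⟨hd, hdx⟩ := hx.2.1.choose_spec
      exact ⟨htrans hdx (hsym hdx), hd, hd⟩
    · obtain ⟨hdmx, hdx⟩ := hx.2.1.choose_spec
      obtain ⟨hdmy, hdy⟩ := hy.2.1.choose_spec
      exact ⟨htrans (htrans (hsym hdx) h.1) hdy, hx.2.1, hy.2.1⟩
  have hedge : numEdges G A A' (restrict r D) ≤ numEdges G A (A ∪ Cl) (restrict r Cl) := by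
    refine numEdges_le_of_imp ?_
    rintro e ⟨he1, he2, he3, he4⟩
    refine ⟨he1, fun v hv => ?_, he3, ?_⟩
    · by_cases hA : v ∈ A
      · exact Or.inl hA
      · exact Or.inr (hDC ⟨he2 v hv, hA⟩)
    · rintro ⟨x, hx⟩
      obtain ⟨v₀, hv₀⟩ : ∃ v, v ∈ e := ⟨e.out.1, Sym2.out_fst_mem e⟩
      obtain ⟨hxv₀, hxCl, hv₀Cl⟩ := hx v₀ hv₀
      obtain ⟨d, hd, hdx⟩ := hxCl
      refine he4 ⟨d, fun v hv => ?_⟩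
      obtain ⟨hxv, _, hvCl⟩ := hx v hv
      exact ⟨htrans hdx hxv, hd, ⟨he2 v hv, (hClsub hvCl).2⟩⟩
  have hwge : weight G α A (A ∪ Cl) (restrict r Cl) ≤ weight G α A A' (restrict r D) := by
    unfold weight
    have c1 : (numClasses (restrict r Cl) : ℝ) ≤ (numClasses (restrict r D) : ℝ) :=
      Nat.cast_le.mpr hcls
    have c2 : (numEdges G A A' (restrict r D) : ℝ) ≤
        (numEdges G A (A ∪ Cl) (restrict r Cl) : ℝ) := Nat.cast_le.mpr hedge
    have := mul_le_mul_of_nonneg_left c2 h0.le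
    linarith
  linarith

lemma exists_pair [Finite V] {G : SimpleGraph V} {α : ℝ} (hirr : Irrational α)
    {A B : Set V} (hAB : A ⊆ B) (hne : A ≠ B) (hles : Les G α A B) :
    ∃ A₁ r, A ⊆ A₁ ∧ A₁ ⊂ B ∧ IsEquivOn r (B \ A₁) ∧ 0 < weight G α A₁ B r := by
  have h2 : ¬ Lei G α A B := fun h => hles.2 ⟨B, ⟨h, hne⟩, subset_rfl⟩
  unfold Lei at h2
  push_neg at h2
  obtain ⟨A₁, hA₁, hA₁B, hnc⟩ := h2 hAB
  unfold Ltc at hnc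
  push_neg at hnc
  obtain ⟨r, hr, hw⟩ := hnc hA₁B
  refine ⟨A₁, r, hA₁, hA₁B, hr, ?_⟩
  have hcls : 0 < numClasses r := by
    obtain ⟨x, hxB, hxA₁⟩ := Set.exists_of_ssubset hA₁B
    exact numClasses_pos ⟨x, hr.1 x ⟨hxB, hxA₁⟩⟩
  exact weight_pos_of_nonneg hirr hcls hw

lemma pair_xi_of_min [Finite V] {G : SimpleGraph V} {α : ℝ} (h0 : 0 < α)
    {A₁ B : Set V} (hA₁B : A₁ ⊂ B) {μ : V → V → Prop} (hEq : IsEquivOn μ (B \ A₁))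
    (hw : 0 < weight G α A₁ B μ)
    (hmin : ∀ A₂ r₂, A₁ ⊆ A₂ → A₂ ⊂ B → IsEquivOn r₂ (B \ A₂) →
      0 < weight G α A₂ B r₂ → (B \ A₁).ncard ≤ (B \ A₂).ncard) :
    ∀ C₂ ⊆ B \ A₁, C₂.Nonempty → RClosed μ C₂ →
      0 < weight G α A₁ (A₁ ∪ C₂) (restrict μ C₂) := by
  intro C₂ hC₂sub hC₂ne hC₂closed
  obtain ⟨hrefl, hsym, htrans, hdom⟩ := hEq
  set C' : Set V := (B \ A₁) \ C₂ with hC'def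
  by_cases hC'e : C' = ∅
  · have hC₂eq : C₂ = B \ A₁ :=
      subset_antisymm hC₂sub (fun x hx => by_contra fun h =>
        Set.eq_empty_iff_forall_notMem.mp hC'e x ⟨hx, h⟩)
    have hres : restrict μ C₂ = μ := by
      funext x y
      apply propext
      constructor
      · rintro ⟨h, _, _⟩; exact h
      · intro h; exact ⟨h, hC₂eq ▸ (hdom h).1, hC₂eq ▸ (hdom h).2⟩
    have hun : A₁ ∪ C₂ = B := by rw [hC₂eq]; exact Set.union_diff_cancel hA₁B.subset
    rw [hres, hun]; exact hw
  · have hC'ne : C'.Nonempty := Set.nonempty_iff_ne_empty.mpr hC'e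
    have hC'sub : C' ⊆ B \ A₁ := Set.diff_subset
    have hC'closed : RClosed μ C' := by
      intro x y hx hxy
      exact ⟨(hdom hxy).2, fun hyC₂ => hx.2 (hC₂closed hyC₂ (hsym hxy))⟩
    by_contra hc
    push_neg at hc
    have hcls : numClasses μ ≤ numClasses (restrict μ C₂) + numClasses (restrict μ C') := by
      refine numClasses_le_add (fun x hx => ?_) ?_ ?_ hsym htrans
      · have hx' : x ∈ B \ A₁ := (hdom hx).1
        by_cases h : x ∈ C₂
        · exact Or.inl ⟨hx, h, h⟩
        · exact Or.inr ⟨hx, ⟨hx', h⟩, ⟨hx', h⟩⟩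
      · rintro a b ⟨h, _, _⟩; exact h
      · rintro a b ⟨h, _, _⟩; exact h
    have hedg : numEdges G A₁ (A₁ ∪ C₂) (restrict μ C₂) +
        numEdges G (A₁ ∪ C₂) B (restrict μ C') ≤ numEdges G A₁ B μ := by
      refine add_numEdges_le ?_ ?_ ?_
      · rintro e ⟨he1, he2, he3, he4⟩
        refine ⟨he1, fun v hv => ?_, he3, ?_⟩
        · rcases he2 v hv with h | h
          · exact hA₁B.subset h
          · exact (hC₂sub h).1
        · rintro ⟨x, hx⟩
          have he3' : ∃ v ∈ e, v ∉ A₁ := by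
            by_contra hcon; push_neg at hcon; exact he3 hcon
          obtain ⟨v₁, hv₁e, hv₁⟩ := he3'
          have hv₁C₂ : v₁ ∈ C₂ := by
            rcases he2 v₁ hv₁e with h | h
            · exact absurd h hv₁
            · exact h
          have hxC₂ : x ∈ C₂ := hC₂closed hv₁C₂ (hsym (hx v₁ hv₁e))
          exact he4 ⟨x, fun v hv => ⟨hx v hv, hxC₂, hC₂closed hxC₂ (hx v hv)⟩⟩
      · rintro e ⟨he1, he2, he3, he4⟩
        refine ⟨he1, he2, fun hA => he3 (fun v hv => Or.inl (hA v hv)), ?_⟩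
        rintro ⟨x, hx⟩
        have he3' : ∃ v ∈ e, v ∉ A₁ ∪ C₂ := by
          by_contra hcon; push_neg at hcon; exact he3 hcon
        obtain ⟨v₁, hv₁e, hv₁⟩ := he3'
        have hv₁C' : v₁ ∈ C' :=
          ⟨⟨he2 v₁ hv₁e, fun h => hv₁ (Or.inl h)⟩, fun h => hv₁ (Or.inr h)⟩
        have hxC' : x ∈ C' := hC'closed hv₁C' (hsym (hx v₁ hv₁e))
        exact he4 ⟨x, fun v hv => ⟨hx v hv, hxC', hC'closed hxC' (hx v hv)⟩⟩
      · rintro e ⟨_, he2, _, _⟩ ⟨_, _, he3', _⟩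
        exact he3' (fun v hv => he2 v hv)
    have hwle : weight G α A₁ B μ ≤ weight G α A₁ (A₁ ∪ C₂) (restrict μ C₂) +
        weight G α (A₁ ∪ C₂) B (restrict μ C') := by
      unfold weight
      have c1 : (numClasses μ : ℝ) ≤ (numClasses (restrict μ C₂) : ℝ) +
          (numClasses (restrict μ C') : ℝ) := by exact_mod_cast hcls
      have c2 : (numEdges G A₁ (A₁ ∪ C₂) (restrict μ C₂) : ℝ) +
          (numEdges G (A₁ ∪ C₂) B (restrict μ C') : ℝ) ≤ (numEdges G A₁ B μ : ℝ) := by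
        exact_mod_cast hedg
      have := mul_le_mul_of_nonneg_left c2 h0.le
      linarith
    have hw' : 0 < weight G α (A₁ ∪ C₂) B (restrict μ C') := by linarith
    have hA₂B : A₁ ∪ C₂ ⊂ B := by
      constructor
      · exact Set.union_subset hA₁B.subset (fun x hx => (hC₂sub hx).1)
      · intro h
        obtain ⟨x, hx⟩ := hC'ne
        rcases h hx.1.1 with h' | h'
        · exact hx.1.2 h'
        · exact hx.2 h'
    have hset : B \ (A₁ ∪ C₂) = C' := by rw [hC'def, Set.diff_diff]
    have hEq' : IsEquivOn (restrict μ C') (B \ (A₁ ∪ C₂)) := by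
      rw [hset]
      refine ⟨fun x hx => ⟨hrefl x (hC'sub hx), hx, hx⟩, ?_, ?_, ?_⟩
      · rintro x y ⟨h1, h2, h3⟩; exact ⟨hsym h1, h3, h2⟩
      · rintro x y z ⟨h1, h2, h3⟩ ⟨h4, h5, h6⟩; exact ⟨htrans h1 h4, h2, h6⟩
      · rintro x y ⟨h1, h2, h3⟩; exact ⟨h2, h3⟩
    have hmle := hmin (A₁ ∪ C₂) (restrict μ C') Set.subset_union_left hA₂B hEq' hw'
    have hlt : (B \ (A₁ ∪ C₂)).ncard < (B \ A₁).ncard := by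
      rw [hset]
      apply Set.ncard_lt_ncard _ (Set.toFinite _)
      constructor
      · exact hC'sub
      · intro h
        obtain ⟨d, hd⟩ := hC₂ne
        exact ((h (hC₂sub hd)).2) hd
    omega


lemma les_to_xi [Finite V] (G : SimpleGraph V) {α : ℝ} (hirr : Irrational α) (h0 : 0 < α) :
    ∀ n : ℕ, ∀ A B : Set V, (B \ A).ncard ≤ n → A ⊆ B → Les G α A B → A ≠ B →
      ∃ r, IsEquivOn r (B \ A) ∧ ∀ C ⊆ B \ A, C.Nonempty → RClosed r C →
        0 < weight G α A (A ∪ C) (restrict r C) := by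
  intro n
  induction n with
  | zero =>
    intro A B hcard hAB hles hne
    exfalso
    have hempty : (B \ A) = ∅ :=
      (Set.ncard_eq_zero (Set.toFinite _)).mp (Nat.le_zero.mp hcard)
    exact hne (subset_antisymm hAB (fun x hx => by_contra fun h =>
      Set.eq_empty_iff_forall_notMem.mp hempty x ⟨hx, h⟩))
  | succ n ih =>
    intro A B hcard hAB hles hne
    set S : Set ℕ := {k | ∃ A₂, (∃ r₂, A ⊆ A₂ ∧ A₂ ⊂ B ∧ IsEquivOn r₂ (B \ A₂) ∧
      0 < weight G α A₂ B r₂) ∧ (B \ A₂).ncard = k} with hSdef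
    have hSne : S.Nonempty := by
      obtain ⟨A₁, r, h1, h2, h3, h4⟩ := exists_pair hirr hAB hne hles
      exact ⟨(B \ A₁).ncard, A₁, ⟨r, h1, h2, h3, h4⟩, rfl⟩
    obtain ⟨A₁, ⟨μ, hAA₁, hA₁B, hEq₁, hw₁⟩, hcard₁⟩ := Nat.sInf_mem hSne
    have hmin : ∀ A₂ r₂, A₁ ⊆ A₂ → A₂ ⊂ B → IsEquivOn r₂ (B \ A₂) →
        0 < weight G α A₂ B r₂ → (B \ A₁).ncard ≤ (B \ A₂).ncard := by
      intro A₂ r₂ h12 hA₂B hEq₂ hw₂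
      rw [hcard₁]
      exact Nat.sInf_le ⟨A₂, ⟨r₂, hAA₁.trans h12, hA₂B, hEq₂, hw₂⟩, rfl⟩
    have hXi₁ := pair_xi_of_min h0 hA₁B hEq₁ hw₁ hmin
    by_cases hA₁A : A₁ = A
    · subst hA₁A
      exact ⟨μ, hEq₁, hXi₁⟩
    · have hlesA₁ : Les G α A A₁ :=
        ⟨hAA₁, fun ⟨A', h1, h2⟩ => hles.2 ⟨A', h1, h2.trans hA₁B.subset⟩⟩
      have hcard' : (A₁ \ A).ncard ≤ n := by
        have hsub : A₁ \ A ⊂ B \ A := by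
          constructor
          · exact fun x hx => ⟨hA₁B.subset hx.1, hx.2⟩
          · intro h
            obtain ⟨x, hxB, hxA₁⟩ := Set.exists_of_ssubset hA₁B
            exact hxA₁ (h ⟨hxB, fun hxA => hxA₁ (hAA₁ hxA)⟩).1
        have := Set.ncard_lt_ncard hsub (Set.toFinite _)
        omega
      obtain ⟨lam, hEqlam, hXilam⟩ :=
        ih A A₁ hcard' hAA₁ hlesA₁ (fun h => hA₁A h.symm)
      obtain ⟨lrefl, lsym, ltrans, ldom⟩ := hEqlam
      obtain ⟨mrefl, msym, mtrans, mdom⟩ := hEq₁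
      refine ⟨fun x y => lam x y ∨ μ x y, ?_, ?_⟩
      · refine ⟨?_, ?_, ?_, ?_⟩
        · intro x hx
          by_cases h : x ∈ A₁
          · exact Or.inl (lrefl x ⟨h, hx.2⟩)
          · exact Or.inr (mrefl x ⟨hx.1, h⟩)
        · rintro x y (h | h)
          · exact Or.inl (lsym h)
          · exact Or.inr (msym h)
        · rintro x y z (h1 | h1) (h2 | h2)
          · exact Or.inl (ltrans h1 h2)
          · exact absurd (ldom h1).2.1 (mdom h2).1.2
          · exact absurd (ldom h2).1.1 (mdom h1).2.2
          · exact Or.inr (mtrans h1 h2)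
        · rintro x y (h | h)
          · obtain ⟨⟨hx1, hx2⟩, ⟨hy1, hy2⟩⟩ := ldom h
            exact ⟨⟨hA₁B.subset hx1, hx2⟩, ⟨hA₁B.subset hy1, hy2⟩⟩
          · obtain ⟨⟨hx1, hx2⟩, ⟨hy1, hy2⟩⟩ := mdom h
            exact ⟨⟨hx1, fun hh => hx2 (hAA₁ hh)⟩, ⟨hy1, fun hh => hy2 (hAA₁ hh)⟩⟩
      · intro C hCsub hCne hCclosed
        set C₁ : Set V := C ∩ (A₁ \ A) with hC₁def
        set C₂ : Set V := C ∩ (B \ A₁) with hC₂def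
        have hC₁C : C₁ ⊆ C := Set.inter_subset_left
        have hC₂C : C₂ ⊆ C := Set.inter_subset_left
        have hCun : C ⊆ C₁ ∪ C₂ := by
          intro x hx
          obtain ⟨hxB, hxA⟩ := hCsub hx
          by_cases h : x ∈ A₁
          · exact Or.inl ⟨hx, h, hxA⟩
          · exact Or.inr ⟨hx, hxB, h⟩
        have hC₁sub : C₁ ⊆ A₁ \ A := Set.inter_subset_right
        have hC₂sub : C₂ ⊆ B \ A₁ := Set.inter_subset_right
        have hC₁closed : RClosed lam C₁ := by
          intro x y hx hxy
          exact ⟨hCclosed hx.1 (Or.inl hxy), (ldom hxy).2⟩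
        have hC₂closed : RClosed μ C₂ := by
          intro x y hx hxy
          exact ⟨hCclosed hx.1 (Or.inr hxy), (mdom hxy).2⟩
        have hcls : numClasses (restrict lam C₁) + numClasses (restrict μ C₂) ≤
            numClasses (restrict (fun x y => lam x y ∨ μ x y) C) := by
          refine add_numClasses_le ?_ ?_ ?_ ?_ ?_ ?_ ?_ ?_ ?_
          · rintro a b ⟨h, h2, h3⟩; exact ⟨Or.inl h, hC₁C h2, hC₁C h3⟩
          · rintro a b ⟨h, h2, h3⟩; exact ⟨Or.inr h, hC₂C h2, hC₂C h3⟩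
          · rintro a b ⟨h1, h2, h3⟩; exact ⟨lsym h1, h3, h2⟩
          · rintro a b c ⟨h1, h2, h3⟩ ⟨h4, h5, h6⟩; exact ⟨ltrans h1 h4, h2, h6⟩
          · rintro a b ⟨h1, h2, h3⟩; exact ⟨msym h1, h3, h2⟩
          · rintro a b c ⟨h1, h2, h3⟩ ⟨h4, h5, h6⟩; exact ⟨mtrans h1 h4, h2, h6⟩
          · rintro x y ⟨_, hx, _⟩ ⟨_, hy, _⟩ ⟨(h | h), _, _⟩
            · exact ⟨h, hx, hy⟩
            · exact absurd (hC₁sub hx).1 (mdom h).1.2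
          · rintro x y ⟨_, hx, _⟩ ⟨_, hy, _⟩ ⟨(h | h), _, _⟩
            · exact absurd (ldom h).1.1 (hC₂sub hx).2
            · exact ⟨h, hx, hy⟩
          · rintro x y ⟨_, hx, _⟩ ⟨_, hy, _⟩ ⟨(h | h), _, _⟩
            · exact (hC₂sub hy).2 (ldom h).2.1
            · exact (mdom h).1.2 (hC₁sub hx).1
        have hedg : numEdges G A (A ∪ C) (restrict (fun x y => lam x y ∨ μ x y) C) ≤
            numEdges G A (A ∪ C₁) (restrict lam C₁) +
              numEdges G A₁ (A₁ ∪ C₂) (restrict μ C₂) := by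
          refine numEdges_le_add (B₁ := A ∪ C₁) ?_ ?_
          · rintro e ⟨he1, he2, he3, he4⟩ hall
            refine ⟨he1, hall, he3, ?_⟩
            rintro ⟨x, hx⟩
            exact he4 ⟨x, fun v hv =>
              ⟨Or.inl (hx v hv).1, hC₁C (hx v hv).2.1, hC₁C (hx v hv).2.2⟩⟩
          · rintro e ⟨he1, he2, he3, he4⟩ hnall
            have hex : ∃ v ∈ e, v ∉ A ∪ C₁ := by
              by_contra hcon; push_neg at hcon; exact hnall hcon
            obtain ⟨v₁, hv₁e, hv₁⟩ := hex
            have hv₁C₂ : v₁ ∈ C₂ := by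
              rcases he2 v₁ hv₁e with h | h
              · exact absurd (Or.inl h) hv₁
              · rcases hCun h with h' | h'
                · exact absurd (Or.inr h') hv₁
                · exact h'
            refine ⟨he1, fun v hv => ?_, ?_, ?_⟩
            · rcases he2 v hv with h | h
              · exact Or.inl (hAA₁ h)
              · rcases hCun h with h' | h'
                · exact Or.inl (hC₁sub h').1
                · exact Or.inr h'
            · intro hallA₁
              exact (hC₂sub hv₁C₂).2 (hallA₁ v₁ hv₁e)
            · rintro ⟨x, hx⟩
              exact he4 ⟨x, fun v hv =>
                ⟨Or.inr (hx v hv).1, hC₂C (hx v hv).2.1, hC₂C (hx v hv).2.2⟩⟩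
        have hw1 : 0 ≤ weight G α A (A ∪ C₁) (restrict lam C₁) := by
          by_cases h : C₁ = ∅
          · have hz : weight G α A (A ∪ C₁) (restrict lam C₁) = 0 := by
              rw [h, Set.union_empty]
              unfold weight
              rw [numClasses_eq_zero (fun x hx => absurd (h ▸ hx.2.1) (Set.notMem_empty x)),
                numEdges_eq_zero subset_rfl]
              simp
            rw [hz]
          · exact (hXilam C₁ hC₁sub (Set.nonempty_iff_ne_empty.mpr h) hC₁closed).le
        have hw2 : 0 ≤ weight G α A₁ (A₁ ∪ C₂) (restrict μ C₂) := by
          by_cases h : C₂ = ∅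
          · have hz : weight G α A₁ (A₁ ∪ C₂) (restrict μ C₂) = 0 := by
              rw [h, Set.union_empty]
              unfold weight
              rw [numClasses_eq_zero (fun x hx => absurd (h ▸ hx.2.1) (Set.notMem_empty x)),
                numEdges_eq_zero subset_rfl]
              simp
            rw [hz]
          · exact (hXi₁ C₂ hC₂sub (Set.nonempty_iff_ne_empty.mpr h) hC₂closed).le
        have hwpos : 0 < weight G α A (A ∪ C₁) (restrict lam C₁) +
            weight G α A₁ (A₁ ∪ C₂) (restrict μ C₂) := by
          obtain ⟨x, hx⟩ := hCne
          rcases hCun hx with h | h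
          · have := hXilam C₁ hC₁sub ⟨x, h⟩ hC₁closed; linarith
          · have := hXi₁ C₂ hC₂sub ⟨x, h⟩ hC₂closed; linarith
        have hfin : weight G α A (A ∪ C₁) (restrict lam C₁) +
            weight G α A₁ (A₁ ∪ C₂) (restrict μ C₂) ≤
            weight G α A (A ∪ C) (restrict (fun x y => lam x y ∨ μ x y) C) := by
          unfold weight
          have c1 := (Nat.cast_le (α := ℝ)).mpr hcls
          have c2 := (Nat.cast_le (α := ℝ)).mpr hedg
          push_cast at c1 c2
          have := mul_le_mul_of_nonneg_left c2 h0.le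
          linarith
        linarith


theorem stmt5 {V : Type*} [Fintype V] (G : SimpleGraph V) (α : ℝ)
    (hirr : Irrational α) (h0 : 0 < α) (h1 : α < 1)
    (A B : Set V) (hAB : A ⊆ B) :
    Les G α A B ↔
      A = B ∨ ∃ r : V → V → Prop, IsEquivOn r (B \ A) ∧
        ∀ C ⊆ B \ A, C.Nonempty → RClosed r C →
          0 < weight G α A (A ∪ C) (restrict r C) := by
  constructor
  · intro hles
    by_cases hne : A = B
    · exact Or.inl hne
    · exact Or.inr (les_to_xi G hirr h0 (B \ A).ncard A B le_rfl hAB hles hne)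
  · rintro (rfl | ⟨r, hEq, hXi⟩)
    · refine ⟨subset_rfl, ?_⟩
      rintro ⟨A', ⟨⟨hAA', _⟩, hne⟩, hA'B⟩
      exact hne (subset_antisymm hAA' hA'B)
    · exact xi_to_les G α h0 hAB hEq hXi


end ZeroOneLaw
end

section
/- The relation ≤*_i on finite graphs is transitive: if A ≤*_i B and B ≤*_i C (with A ⊆ B ⊆ C induced subgraphs), then A ≤*_i C. -/
namespace ZeroOneLaw

variable {V : Type*}

theorem stmt6 {V : Type*} [Fintype V] (G : SimpleGraph V) (α : ℝ)
    (hirr : Irrational α) (h0 : 0 < α) (h1 : α < 1)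
    (A B C : Set V) (hAB : A ⊆ B) (hBC : B ⊆ C)
    (h1' : Lei G α A B) (h2' : Lei G α B C) :
    Lei G α A C := by
  classical
  obtain ⟨-, h1c⟩ := h1'
  obtain ⟨-, h2c⟩ := h2'
  refine ⟨hAB.trans hBC, fun A' hAA' hA'C => ⟨hA'C, fun r hr => ?_⟩⟩
  obtain ⟨hrefl, hsymm, htrans, hmem⟩ := hr
  by_cases hBA' : B ⊆ A'
  · exact (h2c A' hBA' hA'C).2 r ⟨hrefl, hsymm, htrans, hmem⟩
  -- the splitting sets
  set A1 : Set V := A' ∩ B with hA1def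
  set D1 : Set V := B \ A1 with hD1def
  set D2 : Set V := {x | x ∈ C \ A' ∧ ∀ y, r x y → y ∉ B} with hD2def
  set A2 : Set V := C \ D2 with hA2def
  set r1 : V → V → Prop := restrict r D1 with hr1def
  set r2 : V → V → Prop := restrict r D2 with hr2def
  have hD1sub : D1 ⊆ C \ A' := fun x hx => ⟨hBC hx.1, fun hA => hx.2 ⟨hA, hx.1⟩⟩
  have hD2sub : D2 ⊆ C \ A' := fun x hx => hx.1
  have hD2C : D2 ⊆ C := fun x hx => hx.1.1
  have hCA2 : C \ A2 = D2 := Set.diff_diff_cancel_left hD2C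
  have hD2closed : ∀ {x y : V}, x ∈ D2 → r x y → y ∈ D2 := by
    intro x y hx hxy
    exact ⟨hmem hxy |>.2, fun z hz => hx.2 z (htrans hxy hz)⟩
  -- r1 is an equivalence on B \ A1
  have hr1equiv : IsEquivOn r1 (B \ A1) := by
    refine ⟨fun x hx => ⟨hrefl x (hD1sub hx), hx, hx⟩,
      fun x y h => ⟨hsymm h.1, h.2.2, h.2.1⟩,
      fun x y z h h' => ⟨htrans h.1 h'.1, h.2.1, h'.2.2⟩,
      fun x y h => ⟨h.2.1, h.2.2⟩⟩
  -- r2 is an equivalence on C \ A2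
  have hr2equiv : IsEquivOn r2 (C \ A2) := by
    rw [hCA2]
    refine ⟨fun x hx => ⟨hrefl x (hD2sub hx), hx, hx⟩,
      fun x y h => ⟨hsymm h.1, h.2.2, h.2.1⟩,
      fun x y z h h' => ⟨htrans h.1 h'.1, h.2.1, h'.2.2⟩,
      fun x y h => ⟨h.2.1, h.2.2⟩⟩
  -- counting classes
  have classeq : ∀ {x y : V}, r x y → {z | r x z} = {z | r y z} := by
    intro x y hxy
    ext z
    exact ⟨fun h => htrans (hsymm hxy) h, fun h => htrans hxy h⟩
  have key_classes : numClasses r ≤ numClasses r1 + numClasses r2 := by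
    set S0 : Set (Set V) := {t | ∃ x, r x x ∧ t = {y | r x y}} with hS0
    set S1 : Set (Set V) := {t | ∃ x, r1 x x ∧ t = {y | r1 x y}} with hS1
    set S2 : Set (Set V) := {t | ∃ x, r2 x x ∧ t = {y | r2 x y}} with hS2
    set φ : Set V → Set V := fun t => if (t ∩ D1).Nonempty then t ∩ D1 else t with hφ
    have hmap : ∀ t ∈ S0, φ t ∈ S1 ∪ S2 := by
      rintro t ⟨x, hxx, rfl⟩
      by_cases hne : ({y | r x y} ∩ D1).Nonempty
      · left
        simp only [hφ, if_pos hne]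
        obtain ⟨z, hz1, hz2⟩ := hne
        refine ⟨z, ⟨hrefl z (hD1sub hz2), hz2, hz2⟩, ?_⟩
        ext w
        constructor
        · rintro ⟨hw1, hw2⟩
          exact ⟨htrans (hsymm hz1) hw1, hz2, hw2⟩
        · rintro ⟨hw1, -, hw2⟩
          exact ⟨htrans hz1 hw1, hw2⟩
      · right
        simp only [hφ, if_neg hne]
        have hxD2 : x ∈ D2 := by
          refine ⟨hmem hxx |>.1, fun y hy hyB => hne ⟨y, hy, hyB, fun hA1 => ?_⟩⟩
          exact (hmem hy).2.2 hA1.1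
        refine ⟨x, ⟨hxx, hxD2, hxD2⟩, ?_⟩
        ext w
        constructor
        · intro hw
          exact ⟨hw, hxD2, hD2closed hxD2 hw⟩
        · rintro ⟨hw, -, -⟩
          exact hw
    have hinj : Set.InjOn φ S0 := by
      rintro t ⟨x, hxx, rfl⟩ t' ⟨x', hxx', rfl⟩ heq
      have share : ∀ {w : V}, r x w → r x' w → {y | r x y} = {y | r x' y} := by
        intro w h1 h2
        rw [classeq h1, classeq h2]
      by_cases hp1 : ({y | r x y} ∩ D1).Nonempty <;>
        by_cases hp2 : ({y | r x' y} ∩ D1).Nonempty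
      · simp only [hφ, if_pos hp1, if_pos hp2] at heq
        obtain ⟨w, hw1, hw2⟩ := hp1
        have hw' : w ∈ {y | r x' y} ∩ D1 := heq ▸ (⟨hw1, hw2⟩ : w ∈ {y | r x y} ∩ D1)
        exact share hw1 hw'.1
      · exfalso
        simp only [hφ, if_pos hp1, if_neg hp2] at heq
        obtain ⟨w, hw⟩ := hp1
        exact hp2 ⟨w, heq ▸ hw, hw.2⟩
      · exfalso
        simp only [hφ, if_neg hp1, if_pos hp2] at heq
        obtain ⟨w, hw⟩ := hp2
        exact hp1 ⟨w, heq ▸ hw, hw.2⟩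
      · simp only [hφ, if_neg hp1, if_neg hp2] at heq
        exact heq
    calc numClasses r = S0.ncard := rfl
      _ = (φ '' S0).ncard := (Set.ncard_image_of_injOn hinj).symm
      _ ≤ (S1 ∪ S2).ncard := Set.ncard_le_ncard (Set.image_subset_iff.mpr hmap) (Set.toFinite _)
      _ ≤ S1.ncard + S2.ncard := Set.ncard_union_le _ _
  -- counting edges
  have key_edges : numEdges G A1 B r1 + numEdges G A2 C r2 ≤ numEdges G A' C r := by
    set E1 : Set (Sym2 V) := {e | BadEdge G A1 B r1 e} with hE1
    set E2 : Set (Sym2 V) := {e | BadEdge G A2 C r2 e} with hE2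
    set E0 : Set (Sym2 V) := {e | BadEdge G A' C r e} with hE0
    have hsub1 : E1 ⊆ E0 := by
      rintro e ⟨hE, hBe, hnA1, hncls⟩
      refine ⟨hE, fun v hv => hBC (hBe v hv), fun h => hnA1 fun v hv => ⟨h v hv, hBe v hv⟩, ?_⟩
      rintro ⟨x, hx⟩
      have ha : e.out.1 ∈ e := Sym2.out_fst_mem e
      have hxa : r x e.out.1 := hx _ ha
      have haD1 : e.out.1 ∈ D1 := ⟨hBe _ ha, fun hA1 => (hmem hxa).2.2 hA1.1⟩
      exact hncls ⟨e.out.1, fun v hv =>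
        ⟨htrans (hsymm hxa) (hx v hv), haD1, hBe v hv, fun hA1 => (hmem (hx v hv)).2.2 hA1.1⟩⟩
    have hsub2 : E2 ⊆ E0 := by
      rintro e ⟨hE, hCe, hnA2, hncls⟩
      push_neg at hnA2
      obtain ⟨w, hwe, hwA2⟩ := hnA2
      have hwD2 : w ∈ D2 := by
        by_contra h
        exact hwA2 ⟨hCe w hwe, h⟩
      refine ⟨hE, hCe, fun h => hwD2.1.2 (h w hwe), ?_⟩
      rintro ⟨x, hx⟩
      have hxw : r x w := hx w hwe
      exact hncls ⟨w, fun v hv =>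
        ⟨htrans (hsymm hxw) (hx v hv), hwD2, hD2closed hwD2 (htrans (hsymm hxw) (hx v hv))⟩⟩
    have hdisj : Disjoint E1 E2 := by
      rw [Set.disjoint_left]
      rintro e ⟨-, hBe, -, -⟩ ⟨-, hCe, hnA2, -⟩
      push_neg at hnA2
      obtain ⟨w, hwe, hwA2⟩ := hnA2
      have hwD2 : w ∈ D2 := by
        by_contra h
        exact hwA2 ⟨hCe w hwe, h⟩
      exact hwD2.2 w (hrefl w hwD2.1) (hBe w hwe)
    calc numEdges G A1 B r1 + numEdges G A2 C r2 = E1.ncard + E2.ncard := rfl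
      _ = (E1 ∪ E2).ncard := (Set.ncard_union_eq hdisj (Set.toFinite _) (Set.toFinite _)).symm
      _ ≤ E0.ncard := Set.ncard_le_ncard (Set.union_subset hsub1 hsub2) (Set.toFinite _)
      _ = numEdges G A' C r := rfl
  -- the first weight is negative
  have hA1B : A1 ⊂ B := by
    refine Set.ssubset_iff_subset_ne.mpr ⟨Set.inter_subset_right, fun h => hBA' fun b hb => ?_⟩
    have : b ∈ A1 := h ▸ hb
    exact this.1
  have hw1 : weight G α A1 B r1 < 0 :=
    (h1c A1 (Set.subset_inter hAA' hAB) hA1B).2 r1 hr1equiv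
  -- the second weight is nonpositive
  have hw2 : weight G α A2 C r2 ≤ 0 := by
    by_cases hA2C : A2 = C
    · have hD2e : D2 = ∅ := by
        ext x
        simp only [Set.mem_empty_iff_false, iff_false]
        intro hx
        have hx' : x ∈ A2 := by rw [hA2C]; exact hD2C hx
        rw [hA2def] at hx'
        exact hx'.2 hx
      have hnc2 : numClasses r2 = 0 := by
        have hempty : IsEmpty {t : Set V // ∃ x, r2 x x ∧ t = {y | r2 x y}} := by
          constructor
          rintro ⟨t, x, hxx, -⟩
          have : x ∈ D2 := hxx.2.1
          rw [hD2e] at this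
          exact this
        exact Nat.card_of_isEmpty
      have : (0:ℝ) ≤ α * (numEdges G A2 C r2 : ℝ) :=
        mul_nonneg h0.le (Nat.cast_nonneg _)
      unfold weight
      rw [hnc2]
      push_cast
      linarith
    · have hBA2 : B ⊆ A2 := fun b hb =>
        ⟨hBC hb, fun hD2 => hD2.2 b (hrefl b hD2.1) hb⟩
      have hA2ssC : A2 ⊂ C := Set.ssubset_iff_subset_ne.mpr ⟨Set.diff_subset, hA2C⟩
      exact le_of_lt ((h2c A2 hBA2 hA2ssC).2 r2 hr2equiv)
  -- combine
  have hc : (numClasses r : ℝ) ≤ (numClasses r1 : ℝ) + (numClasses r2 : ℝ) := by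
    exact_mod_cast key_classes
  have he : ((numEdges G A1 B r1 : ℝ) + (numEdges G A2 C r2 : ℝ)) ≤ (numEdges G A' C r : ℝ) := by
    exact_mod_cast key_edges
  have hmul : α * ((numEdges G A1 B r1 : ℝ) + (numEdges G A2 C r2 : ℝ))
      ≤ α * (numEdges G A' C r : ℝ) := mul_le_mul_of_nonneg_left he h0.le
  unfold weight at hw1 hw2 ⊢
  linarith

end ZeroOneLaw
end

section
/- The relation ≤*_s on finite graphs is transitive: if A₀ ≤*_s A₁ and A₁ ≤*_s A₂ (with A₀ ⊆ A₁ ⊆ A₂ induced subgraphs), then A₀ ≤*_s A₂. -/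
namespace ZeroOneLaw

variable {V : Type*}

lemma numEdges_mono {V : Type*} [Fintype V] (G : SimpleGraph V) {A B A' B' : Set V}
    {r : V → V → Prop} (h : ∀ e, BadEdge G A B r e → BadEdge G A' B' r e) :
    numEdges G A B r ≤ numEdges G A' B' r := by
  exact Nat.card_le_card_of_injective
    (fun x : {e : Sym2 V // BadEdge G A B r e} => (⟨x.1, h x.1 x.2⟩ : {e : Sym2 V // BadEdge G A' B' r e}))
    (fun a b hab => Subtype.ext (by simpa using congrArg Subtype.val hab))

theorem stmt7 {V : Type*} [Fintype V] (G : SimpleGraph V) (α : ℝ)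
    (hirr : Irrational α) (h0 : 0 < α) (h1 : α < 1)
    (A₀ A₁ A₂ : Set V) (h01 : A₀ ⊆ A₁) (h12 : A₁ ⊆ A₂)
    (hs1 : Les G α A₀ A₁) (hs2 : Les G α A₁ A₂) :
    Les G α A₀ A₂ := by
  refine ⟨h01.trans h12, ?_⟩
  rintro ⟨A', hlti, hA'2⟩
  by_cases hsub : A' ⊆ A₁
  · exact hs1.2 ⟨A', hlti, hsub⟩
  · apply hs2.2
    refine ⟨A₁ ∪ A', ⟨⟨Set.subset_union_left, ?_⟩, ?_⟩, Set.union_subset h12 hA'2⟩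
    · -- Lei A₁ (A₁ ∪ A')
      intro C hC hCsub
      refine ⟨hCsub, ?_⟩
      intro r hr
      have hA1C : A₁ ⊆ C := hC
      have hDC : (A₁ ∪ A') \ C = A' \ C := by
        ext x
        simp only [Set.mem_diff, Set.mem_union]
        constructor
        · rintro ⟨hx | hx, hxc⟩
          · exact absurd (hA1C hx) hxc
          · exact ⟨hx, hxc⟩
        · rintro ⟨hx, hxc⟩; exact ⟨Or.inr hx, hxc⟩
      have hsetC : A' \ (C ∩ A') = A' \ C := by
        ext x
        simp only [Set.mem_diff, Set.mem_inter_iff]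
        tauto
      have hCA' : C ∩ A' ⊂ A' := by
        obtain ⟨x, hxD, hxC⟩ := Set.exists_of_ssubset hCsub
        have hxA' : x ∈ A' := by
          rcases hxD with hx | hx
          · exact absurd (hA1C hx) hxC
          · exact hx
        refine ⟨Set.inter_subset_right, fun hle => hxC ?_⟩
        exact (hle hxA').1
      have hltc := (hlti.1.2 (C ∩ A')
        (Set.subset_inter (h01.trans hA1C) hlti.1.1) hCA').2 r (by
          rw [hsetC, ← hDC]; exact hr)
      -- compare weights
      have hedge : ∀ e, BadEdge G (C ∩ A') A' r e → BadEdge G C (A₁ ∪ A') r e := by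
        rintro e ⟨he, hB, hnA, hncl⟩
        refine ⟨he, fun v hv => Or.inr (hB v hv), ?_, hncl⟩
        intro hall
        exact hnA fun v hv => ⟨hall v hv, hB v hv⟩
      have hle : (numEdges G (C ∩ A') A' r : ℝ) ≤ (numEdges G C (A₁ ∪ A') r : ℝ) := by
        exact_mod_cast numEdges_mono G hedge
      have : weight G α C (A₁ ∪ A') r ≤ weight G α (C ∩ A') A' r := by
        unfold weight
        have := mul_le_mul_of_nonneg_left hle h0.le
        linarith
      linarith
    · -- A₁ ≠ A₁ ∪ A'
      intro heq
      apply hsub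
      intro x hx
      have : x ∈ A₁ ∪ A' := Or.inr hx
      rwa [← heq] at this

end ZeroOneLaw
end

section
/- For any finite graphs A ⊆ C there exists an induced subgraph B with A ⊆ B ⊆ C such that A ≤*_i B and B ≤*_s C. -/
namespace ZeroOneLaw

variable {V : Type*}

private lemma core [Fintype V] {G : SimpleGraph V} {α : ℝ} (h0 : 0 < α)
    {A' B B' : Set V} (hBB' : B ⊆ B') {r : V → V → Prop}
    (hrefl : ∀ x ∈ B' \ A', r x x) (hsymm : ∀ ⦃x y⦄, r x y → r y x)
    (htrans : ∀ ⦃x y z⦄, r x y → r y z → r x z)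
    (hdom : ∀ ⦃x y⦄, r x y → x ∈ B' \ A' ∧ y ∈ B' \ A')
    {A₀ T Z B₁ : Set V} {t u : V → V → Prop}
    (hA₀ : A₀ = A' ∩ B) (hT : T = B \ A₀) (ht : t = restrict r T)
    (hZ : Z = {z | z ∈ B' \ A' ∧ ∀ y, r z y → y ∉ B}) (hB₁ : B₁ = B' \ Z)
    (hu : u = restrict r Z)
    (hwt : weight G α A₀ B t < 0) (hwu : weight G α B₁ B' u ≤ 0) :
    weight G α A' B' r < 0 := by
  -- basic facts
  have hZnotB : ∀ z ∈ Z, z ∉ B := by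
    intro z hz
    rw [hZ] at hz
    exact hz.2 z (hrefl z hz.1)
  have hZclosed : ∀ ⦃a b⦄, a ∈ Z → r a b → b ∈ Z := by
    intro a b ha hab
    rw [hZ] at ha ⊢
    exact ⟨(hdom hab).2, fun y hby => ha.2 y (htrans hab hby)⟩
  have hBB₁ : B ⊆ B₁ := by
    intro x hx
    rw [hB₁]
    exact ⟨hBB' hx, fun hxZ => hZnotB x hxZ hx⟩
  have hTmem : ∀ {x}, x ∈ B → x ∉ A' → x ∈ T := by
    intro x hxB hxA'
    rw [hT, hA₀]
    exact ⟨hxB, fun h => hxA' h.1⟩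
  -- class count
  have hn : numClasses r ≤ numClasses t + numClasses u := by
    refine le_of_le_of_eq
      (Nat.card_le_card_of_surjective
        (fun k : ({K : Set V // ∃ x, t x x ∧ K = {y | t x y}} ⊕
                  {K : Set V // ∃ x, u x x ∧ K = {y | u x y}}) =>
          match k with
          | Sum.inl K => (⟨{y | ∃ z, z ∈ K.1 ∧ r z y}, by
              obtain ⟨K, c, hcc, hKc⟩ := K
              have hrcc : r c c := by rw [ht] at hcc; exact hcc.1
              refine ⟨c, hrcc, Set.ext fun y => ⟨?_, ?_⟩⟩
              · rintro ⟨z, hzK, hzy⟩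
                have hzK' : z ∈ K := hzK
                rw [hKc] at hzK'
                have hcz : t c z := hzK'
                rw [ht] at hcz
                exact htrans hcz.1 hzy
              · intro hy
                refine ⟨c, ?_, hy⟩
                show c ∈ K
                rw [hKc]; exact hcc⟩ :
            {K : Set V // ∃ x, r x x ∧ K = {y | r x y}})
          | Sum.inr K => ⟨{y | ∃ z, z ∈ K.1 ∧ r z y}, by
              obtain ⟨K, c, hcc, hKc⟩ := K
              have hrcc : r c c := by rw [hu] at hcc; exact hcc.1
              refine ⟨c, hrcc, Set.ext fun y => ⟨?_, ?_⟩⟩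
              · rintro ⟨z, hzK, hzy⟩
                have hzK' : z ∈ K := hzK
                rw [hKc] at hzK'
                have hcz : u c z := hzK'
                rw [hu] at hcz
                exact htrans hcz.1 hzy
              · intro hy
                refine ⟨c, ?_, hy⟩
                show c ∈ K
                rw [hKc]; exact hcc⟩)
        ?_) Nat.card_sum
    rintro ⟨K, x, hxx, hKx⟩
    by_cases hxB : ∃ b, r x b ∧ b ∈ B
    · obtain ⟨b, hxb, hbB⟩ := hxB
      have hbb : r b b := htrans (hsymm hxb) hxb
      have hbT : b ∈ T := hTmem hbB (hdom hxb).2.2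
      have htbb : t b b := by rw [ht]; exact ⟨hbb, hbT, hbT⟩
      refine ⟨Sum.inl ⟨{y | t b y}, b, htbb, rfl⟩, Subtype.ext ?_⟩
      show {y | ∃ z, z ∈ {y | t b y} ∧ r z y} = K
      rw [hKx]
      ext y
      simp only [Set.mem_setOf_eq]
      constructor
      · rintro ⟨z, hbz, hzy⟩
        have hbz' : t b z := hbz
        rw [ht] at hbz'
        exact htrans hxb (htrans hbz'.1 hzy)
      · intro hxy
        exact ⟨b, htbb, htrans (hsymm hxb) hxy⟩
    · have hxZ : x ∈ Z := by
        rw [hZ]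
        exact ⟨(hdom hxx).1, fun y hy hyB => hxB ⟨y, hy, hyB⟩⟩
      have huxx : u x x := by rw [hu]; exact ⟨hxx, hxZ, hxZ⟩
      refine ⟨Sum.inr ⟨{y | u x y}, x, huxx, rfl⟩, Subtype.ext ?_⟩
      show {y | ∃ z, z ∈ {y | u x y} ∧ r z y} = K
      rw [hKx]
      ext y
      simp only [Set.mem_setOf_eq]
      constructor
      · rintro ⟨z, hxz, hzy⟩
        have hxz' : u x z := hxz
        rw [hu] at hxz'
        exact htrans hxz'.1 hzy
      · intro hxy
        exact ⟨x, huxx, hxy⟩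
  -- bad edge transfer
  have hbadT : ∀ e : Sym2 V, BadEdge G A₀ B t e → BadEdge G A' B' r e := by
    intro e
    induction e using Sym2.ind with
    | _ a b =>
      intro h
      refine ⟨h.1, fun v hv => hBB' (h.2.1 v hv), ?_, ?_⟩
      · intro hall
        exact h.2.2.1 fun v hv => by rw [hA₀]; exact ⟨hall v hv, h.2.1 v hv⟩
      · rintro ⟨x, hx⟩
        apply h.2.2.2
        have hxa : r x a := hx a (Sym2.mem_mk_left a b)
        have hxb : r x b := hx b (Sym2.mem_mk_right a b)
        have hab : r a b := htrans (hsymm hxa) hxb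
        have haT : a ∈ T := hTmem (h.2.1 a (Sym2.mem_mk_left a b)) (hdom hxa).2.2
        have hbT : b ∈ T := hTmem (h.2.1 b (Sym2.mem_mk_right a b)) (hdom hxb).2.2
        refine ⟨a, fun v hv => ?_⟩
        rw [Sym2.mem_iff] at hv
        rcases hv with rfl | rfl
        · rw [ht]; exact ⟨htrans (hsymm hxa) hxa, haT, haT⟩
        · rw [ht]; exact ⟨hab, haT, hbT⟩
  have hbadU : ∀ e : Sym2 V, BadEdge G B₁ B' u e → BadEdge G A' B' r e := by
    intro e
    induction e using Sym2.ind with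
    | _ a b =>
      intro h
      have hv₀ : ∃ v ∈ s(a, b), v ∉ B₁ := by
        by_contra hc
        push_neg at hc
        exact h.2.2.1 hc
      obtain ⟨v₀, hv₀e, hv₀B₁⟩ := hv₀
      have hv₀Z : v₀ ∈ Z := by
        by_contra hc
        exact hv₀B₁ (by rw [hB₁]; exact ⟨h.2.1 v₀ hv₀e, hc⟩)
      refine ⟨h.1, h.2.1, ?_, ?_⟩
      · intro hall
        have : v₀ ∈ B' \ A' := by rw [hZ] at hv₀Z; exact hv₀Z.1
        exact this.2 (hall v₀ hv₀e)
      · rintro ⟨x, hx⟩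
        apply h.2.2.2
        have hxa : r x a := hx a (Sym2.mem_mk_left a b)
        have hxb : r x b := hx b (Sym2.mem_mk_right a b)
        have hab : r a b := htrans (hsymm hxa) hxb
        have haZ : a ∈ Z := by
          rw [Sym2.mem_iff] at hv₀e
          rcases hv₀e with rfl | rfl
          · exact hv₀Z
          · exact hZclosed hv₀Z (hsymm hab)
        have hbZ : b ∈ Z := hZclosed haZ hab
        refine ⟨a, fun v hv => ?_⟩
        rw [Sym2.mem_iff] at hv
        rcases hv with rfl | rfl
        · rw [hu]; exact ⟨htrans (hsymm hxa) hxa, haZ, haZ⟩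
        · rw [hu]; exact ⟨hab, haZ, hbZ⟩
  have he : numEdges G A₀ B t + numEdges G B₁ B' u ≤ numEdges G A' B' r := by
    refine le_of_eq_of_le Nat.card_sum.symm
      (Nat.card_le_card_of_injective
        (fun k : ({e : Sym2 V // BadEdge G A₀ B t e} ⊕ {e : Sym2 V // BadEdge G B₁ B' u e}) =>
          match k with
          | Sum.inl e => (⟨e.1, hbadT e.1 e.2⟩ : {e : Sym2 V // BadEdge G A' B' r e})
          | Sum.inr e => ⟨e.1, hbadU e.1 e.2⟩)
        ?_)
    rintro (⟨e₁, h₁⟩ | ⟨e₁, h₁⟩) (⟨e₂, h₂⟩ | ⟨e₂, h₂⟩) hfe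
    · have : e₁ = e₂ := congrArg Subtype.val hfe
      subst this; rfl
    · have : e₁ = e₂ := congrArg Subtype.val hfe
      subst this
      exact absurd (fun v hv => hBB₁ (h₁.2.1 v hv)) h₂.2.2.1
    · have : e₁ = e₂ := congrArg Subtype.val hfe
      subst this
      exact absurd (fun v hv => hBB₁ (h₂.2.1 v hv)) h₁.2.2.1
    · have : e₁ = e₂ := congrArg Subtype.val hfe
      subst this; rfl
  -- arithmetic
  unfold weight at hwt hwu ⊢
  have hn' : (numClasses r : ℝ) ≤ (numClasses t : ℝ) + (numClasses u : ℝ) := by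
    exact_mod_cast hn
  have he' : (numEdges G A₀ B t : ℝ) + (numEdges G B₁ B' u : ℝ) ≤ (numEdges G A' B' r : ℝ) := by
    exact_mod_cast he
  nlinarith [mul_le_mul_of_nonneg_left he' h0.le]


private lemma lei_refl [Fintype V] (G : SimpleGraph V) (α : ℝ) (A : Set V) : Lei G α A A :=
  ⟨subset_rfl, fun A' h1 h2 => absurd h1 h2.2⟩

private lemma lei_trans [Fintype V] {G : SimpleGraph V} {α : ℝ} (h0 : 0 < α)
    {A B B' : Set V} (hAB : Lei G α A B) (hB : Lei G α B B') : Lei G α A B' := by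
  obtain ⟨hAB1, hAB2⟩ := hAB
  obtain ⟨hBB', hB2⟩ := hB
  refine ⟨hAB1.trans hBB', ?_⟩
  intro A' hAA' hA'B'
  refine ⟨hA'B', ?_⟩
  intro r hr
  by_cases hBA' : B ⊆ A'
  · exact (hB2 A' hBA' hA'B').2 r hr
  obtain ⟨hrefl, hsymm, htrans, hdom⟩ := hr
  obtain ⟨b₀, hb₀B, hb₀A'⟩ : ∃ b, b ∈ B ∧ b ∉ A' := by
    rw [Set.not_subset] at hBA'
    exact hBA'
  -- the intermediate objects
  set A₀ : Set V := A' ∩ B with hA₀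
  set Z : Set V := {z | z ∈ B' \ A' ∧ ∀ y, r z y → y ∉ B} with hZ
  set B₁ : Set V := B' \ Z with hB₁
  have hZsub : Z ⊆ B' \ A' := fun z hz => hz.1
  have hZnotB : ∀ z ∈ Z, z ∉ B := fun z hz => hz.2 z (hrefl z hz.1)
  -- the weight hypothesis at the lower level
  have hwt : weight G α A₀ B (restrict r (B \ A₀)) < 0 := by
    have hAA₀ : A ⊆ A₀ := Set.subset_inter hAA' hAB1
    have hA₀B : A₀ ⊂ B := by
      rw [Set.ssubset_iff_subset_ne]
      refine ⟨Set.inter_subset_right, fun h => hb₀A' ?_⟩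
      rw [← h] at hb₀B
      exact hb₀B.1
    refine (hAB2 A₀ hAA₀ hA₀B).2 (restrict r (B \ A₀)) ?_
    have hmem : ∀ x ∈ B \ A₀, x ∈ B' \ A' := by
      intro x hx
      exact ⟨hBB' hx.1, fun hxA' => hx.2 ⟨hxA', hx.1⟩⟩
    exact ⟨fun x hx => ⟨hrefl x (hmem x hx), hx, hx⟩,
      fun x y h => ⟨hsymm h.1, h.2.2, h.2.1⟩,
      fun x y z h h' => ⟨htrans h.1 h'.1, h.2.1, h'.2.2⟩,
      fun x y h => ⟨h.2.1, h.2.2⟩⟩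
  -- the weight hypothesis at the upper level
  have hwu : weight G α B₁ B' (restrict r Z) ≤ 0 := by
    by_cases hZe : Z.Nonempty
    · obtain ⟨z₀, hz₀⟩ := hZe
      have hBB₁ : B ⊆ B₁ := fun x hx => ⟨hBB' hx, fun hxZ => hZnotB x hxZ hx⟩
      have hB₁B' : B₁ ⊂ B' := by
        rw [Set.ssubset_iff_subset_ne]
        refine ⟨Set.diff_subset, fun h => ?_⟩
        have : z₀ ∈ B₁ := by rw [h]; exact (hZsub hz₀).1
        exact this.2 hz₀
      have hdiff : B' \ B₁ = Z := by
        rw [hB₁]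
        exact Set.diff_diff_cancel_left fun z hz => (hZsub hz).1
      refine le_of_lt ((hB2 B₁ hBB₁ hB₁B').2 (restrict r Z) ?_)
      rw [hdiff]
      exact ⟨fun x hx => ⟨hrefl x (hZsub hx), hx, hx⟩,
        fun x y h => ⟨hsymm h.1, h.2.2, h.2.1⟩,
        fun x y z h h' => ⟨htrans h.1 h'.1, h.2.1, h'.2.2⟩,
        fun x y h => ⟨h.2.1, h.2.2⟩⟩
    · have hempty : numClasses (restrict r Z) = 0 := by
        refine Nat.card_eq_zero.mpr (Or.inl ⟨?_⟩)
        rintro ⟨K, x, hxx, _⟩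
        exact hZe ⟨x, hxx.2.1⟩
      unfold weight
      rw [hempty]
      simp only [Nat.cast_zero, zero_sub, neg_nonpos]
      positivity
  exact core h0 hBB' hrefl hsymm htrans hdom hA₀ rfl rfl hZ hB₁ rfl hwt hwu

theorem stmt8 {V : Type*} [Fintype V] (G : SimpleGraph V) (α : ℝ)
    (hirr : Irrational α) (h0 : 0 < α) (h1 : α < 1)
    (A C : Set V) (hAC : A ⊆ C) :
    ∃ B : Set V, A ⊆ B ∧ B ⊆ C ∧ Lei G α A B ∧ Les G α B C := by
  classical
  set S : Set (Set V) := {B | A ⊆ B ∧ B ⊆ C ∧ Lei G α A B} with hS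
  have hSfin : S.Finite := Set.toFinite S
  have hSne : S.Nonempty := ⟨A, subset_rfl, hAC, lei_refl G α A⟩
  obtain ⟨B, hBS, hBmax⟩ := hSfin.exists_maximalFor id S hSne
  obtain ⟨hABs, hBC, hLei⟩ := hBS
  refine ⟨B, hABs, hBC, hLei, hBC, ?_⟩
  rintro ⟨B', ⟨hLei', hne⟩, hB'C⟩
  have hLeiAB' : Lei G α A B' := lei_trans h0 hLei hLei'
  have hB'S : B' ∈ S := ⟨hABs.trans hLei'.1, hB'C, hLeiAB'⟩
  exact hne (le_antisymm hLei'.1 (hBmax hB'S hLei'.1))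

end ZeroOneLaw
end

section
/- For finite graphs A ⊊ B: ¬(A ≤*_s B) if and only if there exists C with A <*_c C and C an induced subgraph of B containing A. -/
namespace ZeroOneLaw

variable {V : Type*}

section Aux

variable [Fintype V] {G : SimpleGraph V} {α : ℝ} {A A'' A' : Set V}

lemma union_isEquivOn {r s : V → V → Prop} (hAA'' : A ⊆ A'') (hA''A' : A'' ⊆ A')
    (hr : IsEquivOn r (A' \ A'')) (hs : IsEquivOn s (A'' \ A)) :
    IsEquivOn (fun x y => r x y ∨ s x y) (A' \ A) := by
  obtain ⟨hr1, hr2, hr3, hr4⟩ := hr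
  obtain ⟨hs1, hs2, hs3, hs4⟩ := hs
  refine ⟨?_, ?_, ?_, ?_⟩
  · intro x hx
    by_cases hx'' : x ∈ A''
    · exact Or.inr (hs1 x ⟨hx'', hx.2⟩)
    · exact Or.inl (hr1 x ⟨hx.1, hx''⟩)
  · rintro x y (h | h)
    · exact Or.inl (hr2 h)
    · exact Or.inr (hs2 h)
  · rintro x y z (h | h) (h' | h')
    · exact Or.inl (hr3 h h')
    · exact absurd (hs4 h').1.1 (hr4 h).2.2
    · exact absurd (hs4 h).2.1 (hr4 h').1.2
    · exact Or.inr (hs3 h h')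
  · rintro x y (h | h)
    · exact ⟨⟨(hr4 h).1.1, fun hxA => (hr4 h).1.2 (hAA'' hxA)⟩,
        ⟨(hr4 h).2.1, fun hyA => (hr4 h).2.2 (hAA'' hyA)⟩⟩
    · exact ⟨⟨hA''A' (hs4 h).1.1, (hs4 h).1.2⟩, ⟨hA''A' (hs4 h).2.1, (hs4 h).2.2⟩⟩

lemma numClasses_union {r s : V → V → Prop}
    (hr : IsEquivOn r (A' \ A'')) (hs : IsEquivOn s (A'' \ A)) :
    numClasses (fun x y => r x y ∨ s x y) = numClasses r + numClasses s := by
  have hrd := hr.2.2.2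
  have hsd := hs.2.2.2
  have hclassr : ∀ x, r x x → {y | r x y ∨ s x y} = {y | r x y} := by
    intro x hx
    ext y
    simp only [Set.mem_setOf_eq]
    exact ⟨fun h => h.resolve_right fun h' => (hrd hx).1.2 (hsd h').1.1, Or.inl⟩
  have hclasss : ∀ x, s x x → {y | r x y ∨ s x y} = {y | s x y} := by
    intro x hx
    ext y
    simp only [Set.mem_setOf_eq]
    exact ⟨fun h => h.resolve_left fun h' => (hrd h').1.2 (hsd hx).1.1, Or.inr⟩
  have hset : {T : Set V | ∃ x, (r x x ∨ s x x) ∧ T = {y | r x y ∨ s x y}}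
      = {T : Set V | ∃ x, r x x ∧ T = {y | r x y}}
        ∪ {T : Set V | ∃ x, s x x ∧ T = {y | s x y}} := by
    ext T
    constructor
    · rintro ⟨x, (hx | hx), rfl⟩
      · exact Or.inl ⟨x, hx, hclassr x hx⟩
      · exact Or.inr ⟨x, hx, hclasss x hx⟩
    · rintro (⟨x, hx, rfl⟩ | ⟨x, hx, rfl⟩)
      · exact ⟨x, Or.inl hx, (hclassr x hx).symm⟩
      · exact ⟨x, Or.inr hx, (hclasss x hx).symm⟩
  have hdisj : Disjoint {T : Set V | ∃ x, r x x ∧ T = {y | r x y}}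
      {T : Set V | ∃ x, s x x ∧ T = {y | s x y}} := by
    rw [Set.disjoint_left]
    rintro T ⟨x, hx, rfl⟩ ⟨u, hu, hTeq⟩
    have hx' : x ∈ {y | s u y} := hTeq ▸ hx
    exact (hrd hx).1.2 (hsd hx').2.1
  calc numClasses (fun x y => r x y ∨ s x y)
      = ({T : Set V | ∃ x, (r x x ∨ s x x) ∧ T = {y | r x y ∨ s x y}} : Set (Set V)).ncard :=
        Nat.card_coe_set_eq _
    _ = ({T : Set V | ∃ x, r x x ∧ T = {y | r x y}}
          ∪ {T : Set V | ∃ x, s x x ∧ T = {y | s x y}}).ncard := by rw [hset]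
    _ = ({T : Set V | ∃ x, r x x ∧ T = {y | r x y}}).ncard
          + ({T : Set V | ∃ x, s x x ∧ T = {y | s x y}}).ncard :=
        Set.ncard_union_eq hdisj (Set.toFinite _) (Set.toFinite _)
    _ = numClasses r + numClasses s := by
        rw [← Nat.card_coe_set_eq, ← Nat.card_coe_set_eq]; rfl

lemma badEdge_iff_s9 {r s : V → V → Prop} (hAA'' : A ⊆ A'') (hA''A' : A'' ⊆ A')
    (hr : IsEquivOn r (A' \ A'')) (hs : IsEquivOn s (A'' \ A)) (e : Sym2 V) :
    BadEdge G A A' (fun x y => r x y ∨ s x y) e ↔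
      BadEdge G A'' A' r e ∨ BadEdge G A A'' s e := by
  have hrd := hr.2.2.2
  have hsd := hs.2.2.2
  constructor
  · rintro ⟨he, hBe, hAe, hcl⟩
    by_cases h'' : ∀ v ∈ e, v ∈ A''
    · refine Or.inr ⟨he, h'', hAe, ?_⟩
      rintro ⟨x, hx⟩
      exact hcl ⟨x, fun v hv => Or.inr (hx v hv)⟩
    · refine Or.inl ⟨he, hBe, h'', ?_⟩
      rintro ⟨x, hx⟩
      exact hcl ⟨x, fun v hv => Or.inl (hx v hv)⟩
  · rintro (⟨he, hBe, hA''e, hcl⟩ | ⟨he, hA''e, hAe, hcl⟩)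
    · refine ⟨he, hBe, fun h => hA''e fun v hv => hAA'' (h v hv), ?_⟩
      rintro ⟨x, hx⟩
      push_neg at hA''e
      obtain ⟨w, hwe, hw⟩ := hA''e
      refine hcl ⟨x, fun v hv => ?_⟩
      rcases hx v hv with h | h
      · exact h
      · rcases hx w hwe with h' | h'
        · exact absurd (hsd h).1.1 (hrd h').1.2
        · exact absurd (hsd h').2.1 hw
    · refine ⟨he, fun v hv => hA''A' (hA''e v hv), hAe, ?_⟩
      rintro ⟨x, hx⟩
      refine hcl ⟨x, fun v hv => ?_⟩
      rcases hx v hv with h | h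
      · exact absurd (hA''e v hv) (hrd h).2.2
      · exact h

lemma numEdges_union {r s : V → V → Prop} (hAA'' : A ⊆ A'') (hA''A' : A'' ⊆ A')
    (hr : IsEquivOn r (A' \ A'')) (hs : IsEquivOn s (A'' \ A)) :
    numEdges G A A' (fun x y => r x y ∨ s x y) = numEdges G A'' A' r + numEdges G A A'' s := by
  have hset : {e : Sym2 V | BadEdge G A A' (fun x y => r x y ∨ s x y) e}
      = {e : Sym2 V | BadEdge G A'' A' r e} ∪ {e : Sym2 V | BadEdge G A A'' s e} := by
    ext e
    simp only [Set.mem_setOf_eq, Set.mem_union]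
    exact badEdge_iff_s9 hAA'' hA''A' hr hs e
  have hdisj : Disjoint {e : Sym2 V | BadEdge G A'' A' r e}
      {e : Sym2 V | BadEdge G A A'' s e} := by
    rw [Set.disjoint_left]
    rintro e h1 h2
    exact h1.2.2.1 h2.2.1
  calc numEdges G A A' (fun x y => r x y ∨ s x y)
      = ({e : Sym2 V | BadEdge G A A' (fun x y => r x y ∨ s x y) e} : Set (Sym2 V)).ncard :=
        Nat.card_coe_set_eq _
    _ = ({e : Sym2 V | BadEdge G A'' A' r e} ∪ {e : Sym2 V | BadEdge G A A'' s e}).ncard := by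
        rw [hset]
    _ = ({e : Sym2 V | BadEdge G A'' A' r e}).ncard
          + ({e : Sym2 V | BadEdge G A A'' s e}).ncard :=
        Set.ncard_union_eq hdisj (Set.toFinite _) (Set.toFinite _)
    _ = numEdges G A'' A' r + numEdges G A A'' s := by
        rw [← Nat.card_coe_set_eq, ← Nat.card_coe_set_eq]; rfl

lemma weight_union {r s : V → V → Prop} (hAA'' : A ⊆ A'') (hA''A' : A'' ⊆ A')
    (hr : IsEquivOn r (A' \ A'')) (hs : IsEquivOn s (A'' \ A)) :
    weight G α A A' (fun x y => r x y ∨ s x y)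
      = weight G α A'' A' r + weight G α A A'' s := by
  unfold weight
  rw [numClasses_union hr hs, numEdges_union hAA'' hA''A' hr hs]
  push_cast
  ring

lemma exists_lti_of_ltc (G : SimpleGraph V) (α : ℝ) (n : ℕ) :
    ∀ (A C : Set V), C.ncard ≤ n → Ltc G α A C → ∃ A', Lti G α A A' ∧ A' ⊆ C := by
  induction n using Nat.strong_induction_on with
  | _ n ih =>
    intro A C hn hAC
    by_cases hC : ∀ A'' : Set V, A ⊆ A'' → A'' ⊂ C → Ltc G α A'' C
    · exact ⟨C, ⟨⟨hAC.1.subset, hC⟩, hAC.1.ne⟩, subset_rfl⟩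
    · push_neg at hC
      obtain ⟨A'', hA''1, hA''2, hA''3⟩ := hC
      rw [Ltc, not_and] at hA''3
      have h3 := hA''3 hA''2
      push_neg at h3
      obtain ⟨r, hr, hwr⟩ := h3
      have hAne : A ≠ A'' := by
        rintro rfl
        exact absurd (hAC.2 r hr) (not_lt.mpr hwr)
      have hLtcA'' : Ltc G α A A'' := by
        refine ⟨hA''1.ssubset_of_ne hAne, fun s hs => ?_⟩
        have ht := hAC.2 _ (union_isEquivOn hA''1 hA''2.subset hr hs)
        rw [weight_union hA''1 hA''2.subset hr hs] at ht
        linarith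
      obtain ⟨A', h1, h2⟩ := ih A''.ncard
        (lt_of_lt_of_le (Set.ncard_lt_ncard hA''2 (Set.toFinite C)) hn)
        A A'' le_rfl hLtcA''
      exact ⟨A', h1, h2.trans hA''2.subset⟩

end Aux

theorem stmt9 {V : Type*} [Fintype V] (G : SimpleGraph V) (α : ℝ)
    (hirr : Irrational α) (h0 : 0 < α) (h1 : α < 1)
    (A B : Set V) (hAB : A ⊂ B) :
    ¬ Les G α A B ↔ ∃ C : Set V, Ltc G α A C ∧ A ⊆ C ∧ C ⊆ B := by
  constructor
  · intro h
    have h' : ∃ A', Lti G α A A' ∧ A' ⊆ B := by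
      by_contra hcon
      exact h ⟨hAB.subset, hcon⟩
    obtain ⟨A', ⟨⟨hsub, hall⟩, hne⟩, hA'B⟩ := h'
    exact ⟨A', hall A subset_rfl (hsub.ssubset_of_ne hne), hsub, hA'B⟩
  · rintro ⟨C, hC, hAC, hCB⟩ hLes
    obtain ⟨A', h1, h2⟩ := exists_lti_of_ltc G α C.ncard A C le_rfl hC
    exact hLes.2 ⟨A', h1, h2.trans hCB⟩

end ZeroOneLaw
end

section
/- If A ⊆ B ⊆ C are finite graphs (induced subgraphs) and A ≤*_s C, then A ≤*_s B. -/
namespace ZeroOneLaw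

variable {V : Type*}

theorem stmt10 {V : Type*} [Fintype V] (G : SimpleGraph V) (α : ℝ)
    (hirr : Irrational α) (h0 : 0 < α) (h1 : α < 1)
    (A B C : Set V) (hAB : A ⊆ B) (hBC : B ⊆ C)
    (h : Les G α A C) :
    Les G α A B := by
  exact ⟨hAB, fun ⟨A', h1', h2'⟩ => h.2 ⟨A', h1', h2'.trans hBC⟩⟩

end ZeroOneLaw
end

section
/- Let A ⊊ B be finite graphs, n ≥ 1, ε > 0, k ∈ ℕ, and let f : A → [n] be injective. Suppose there is no sequence g₀,…,g_{k−1} of injective maps B → [n] extending f, with pairwise disjoint images outside f(A), such that each g_ℓ satisfies |g_ℓ(x) − g_ℓ(y)| ≥ n^ε for all x ∈ B\A and y ∈ A. Then any family of injective maps g : B → [n] extending f with pairwise disjoint images outside f(A) has size at most 2|A|·n^ε + (k−1). -/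
/-- Fact 2.3: if there is no `k`-tuple of pairwise disjoint "far" extensions of `f`,
then any family of pairwise disjoint injective extensions of `f` has size at most
`2|A|·n^ε + (k-1)`. -/
theorem stmt17 {V : Type*} [Fintype V]
    (A B : Finset V) (hAB : A ⊂ B)
    (n : ℕ) (hn : 1 ≤ n) (ε : ℝ) (hε : 0 < ε) (k : ℕ)
    (f : V → ℤ) (hfinj : Set.InjOn f (A : Set V))
    (hfrange : ∀ x ∈ A, f x ∈ Finset.Icc (1 : ℤ) (n : ℤ))
    (hno : ¬ ∃ gs : Fin k → V → ℤ,
      (∀ ℓ : Fin k,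
        (∀ x ∈ A, gs ℓ x = f x) ∧ Set.InjOn (gs ℓ) (B : Set V) ∧
        (∀ x ∈ B, gs ℓ x ∈ Finset.Icc (1 : ℤ) (n : ℤ)) ∧
        (∀ x ∈ B, x ∉ A → ∀ y ∈ A,
          (n : ℝ) ^ ε ≤ |((gs ℓ x : ℤ) : ℝ) - ((gs ℓ y : ℤ) : ℝ)|)) ∧
      (∀ ℓ₁ ℓ₂ : Fin k, ℓ₁ ≠ ℓ₂ →
        ∀ x ∈ B, x ∉ A → ∀ y ∈ B, y ∉ A → gs ℓ₁ x ≠ gs ℓ₂ y))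
    (F : Finset (V → ℤ))
    (hF : ∀ g ∈ F, (∀ x ∈ A, g x = f x) ∧ Set.InjOn g (B : Set V) ∧
      (∀ x ∈ B, g x ∈ Finset.Icc (1 : ℤ) (n : ℤ)))
    (hFdisj : ∀ g₁ ∈ F, ∀ g₂ ∈ F, g₁ ≠ g₂ →
      ∀ x ∈ B, x ∉ A → ∀ y ∈ B, y ∉ A → g₁ x ≠ g₂ y) :
    (F.card : ℝ) ≤ 2 * (A.card : ℝ) * (n : ℝ) ^ ε + ((k : ℝ) - 1) := by
  classical
  rcases Nat.eq_zero_or_pos k with hk0 | hk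
  · exact absurd ⟨fun ℓ => f, fun ℓ => ((by omega : ¬ (ℓ : ℕ) < k) ℓ.isLt).elim,
      fun ℓ₁ => ((by omega : ¬ (ℓ₁ : ℕ) < k) ℓ₁.isLt).elim⟩ hno
  set t : ℝ := (n : ℝ) ^ ε with ht
  have ht1 : 1 ≤ t := Real.one_le_rpow (by exact_mod_cast hn) hε.le
  set m : ℤ := ⌈t⌉ - 1 with hm
  have hm0 : 0 ≤ m := by
    have : 1 ≤ ⌈t⌉ := Int.one_le_ceil_iff.mpr (by linarith)
    omega
  have hmt : (m : ℝ) ≤ t := by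
    have := Int.ceil_lt_add_one t
    push_cast [hm]
    linarith
  set P : (V → ℤ) → Prop := fun g =>
    ∃ x, x ∈ B ∧ x ∉ A ∧ ∃ y, y ∈ A ∧ |((g x : ℤ) : ℝ) - ((g y : ℤ) : ℝ)| < t with hP
  set Fnear := F.filter P with hFn
  set Ffar := F.filter (fun g => ¬ P g) with hFf
  -- far maps: fewer than k of them
  have hfar : Ffar.card < k := by
    by_contra hcon
    push_neg at hcon
    obtain ⟨S, hSsub, hScard⟩ := Finset.exists_subset_card_eq hcon
    apply hno
    have hSF : ∀ g ∈ S, g ∈ F := fun g hg => (Finset.mem_filter.mp (hSsub hg)).1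
    refine ⟨fun ℓ => ((S.equivFin.symm (Fin.cast hScard.symm ℓ) : S) : V → ℤ), ?_, ?_⟩
    · intro ℓ
      set g := ((S.equivFin.symm (Fin.cast hScard.symm ℓ) : S) : V → ℤ) with hg
      have hgS : g ∈ S := (S.equivFin.symm (Fin.cast hScard.symm ℓ)).2
      have hgF := hSF g hgS
      obtain ⟨h1, h2, h3⟩ := hF g hgF
      refine ⟨h1, h2, h3, ?_⟩
      intro x hxB hxA y hyA
      have hnP : ¬ P g := (Finset.mem_filter.mp (hSsub hgS)).2
      by_contra hlt
      push_neg at hlt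
      exact hnP ⟨x, hxB, hxA, y, hyA, hlt⟩
    · intro ℓ₁ ℓ₂ hne x hxB hxA y hyB hyA
      have hgne : ((S.equivFin.symm (Fin.cast hScard.symm ℓ₁) : S) : V → ℤ) ≠
          ((S.equivFin.symm (Fin.cast hScard.symm ℓ₂) : S) : V → ℤ) := by
        intro h
        apply hne
        have h2 := S.equivFin.symm.injective (Subtype.coe_injective h)
        have h3 := congrArg Fin.val h2
        exact Fin.ext h3
      exact hFdisj _ (hSF _ (S.equivFin.symm (Fin.cast hScard.symm ℓ₁)).2) _
        (hSF _ (S.equivFin.symm (Fin.cast hScard.symm ℓ₂)).2) hgne x hxB hxA y hyB hyA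
  -- near maps: inject into small intervals
  set I : Finset ℤ := A.biUnion (fun y => (Finset.Icc (f y - m) (f y + m)).erase (f y)) with hI
  set φ : (V → ℤ) → ℤ := fun g => if h : P g then g h.choose else 0 with hφ
  have hwit : ∀ g ∈ Fnear, ∃ x, x ∈ B ∧ x ∉ A ∧ φ g = g x ∧
      ∃ y, y ∈ A ∧ |((g x : ℤ) : ℝ) - ((g y : ℤ) : ℝ)| < t := by
    intro g hg
    have hPg : P g := (Finset.mem_filter.mp hg).2
    obtain ⟨hxB, hxA, hy⟩ := hPg.choose_spec
    exact ⟨hPg.choose, hxB, hxA, dif_pos hPg, hy⟩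
  have hnear : Fnear.card ≤ I.card := by
    apply Finset.card_le_card_of_injOn φ
    · intro g hg
      obtain ⟨x, hxB, hxA, hφg, y, hyA, hlt⟩ := hwit g hg
      have hgF : g ∈ F := (Finset.mem_filter.mp hg).1
      obtain ⟨h1, h2, h3⟩ := hF g hgF
      have hgy : g y = f y := h1 y hyA
      have hxy : g x ≠ f y := by
        rw [← hgy]
        intro h
        exact hxA (by
          have : x = y := h2 (Finset.mem_coe.mpr hxB) (Finset.mem_coe.mpr (hAB.1 hyA)) h
          rwa [this])
      have habs : |g x - f y| ≤ m := by
        have h1' : (|g x - f y| : ℝ) < t := by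
          rw [hgy] at hlt
          push_cast
          exact_mod_cast hlt
        have h2' : (|g x - f y| : ℝ) < (⌈t⌉ : ℝ) := lt_of_lt_of_le h1' (Int.le_ceil t)
        have : |g x - f y| < ⌈t⌉ := by exact_mod_cast h2'
        omega
      rw [hI, Finset.mem_coe, Finset.mem_biUnion]
      refine ⟨y, hyA, Finset.mem_erase.mpr ⟨by rw [hφg]; exact hxy, ?_⟩⟩
      rw [hφg, Finset.mem_Icc]
      rw [abs_le] at habs
      omega
    · intro g₁ hg₁ g₂ hg₂ hφeq
      by_contra hne
      obtain ⟨x₁, hx₁B, hx₁A, hφ₁, _⟩ := hwit g₁ hg₁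
      obtain ⟨x₂, hx₂B, hx₂A, hφ₂, _⟩ := hwit g₂ hg₂
      exact hFdisj g₁ (Finset.mem_filter.mp hg₁).1 g₂ (Finset.mem_filter.mp hg₂).1 hne
        x₁ hx₁B hx₁A x₂ hx₂B hx₂A (by rw [← hφ₁, ← hφ₂, hφeq])
  have hIcard : I.card ≤ A.card * (2 * m).toNat := by
    calc I.card ≤ ∑ y ∈ A, ((Finset.Icc (f y - m) (f y + m)).erase (f y)).card :=
          Finset.card_biUnion_le
      _ ≤ ∑ y ∈ A, (2 * m).toNat := by
          apply Finset.sum_le_sum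
          intro y _
          have hmem : f y ∈ Finset.Icc (f y - m) (f y + m) := by
            rw [Finset.mem_Icc]; omega
          rw [Finset.card_erase_of_mem hmem, Int.card_Icc]
          omega
      _ = A.card * (2 * m).toNat := by rw [Finset.sum_const, smul_eq_mul]
  have hsplit : Fnear.card + Ffar.card = F.card := Finset.card_filter_add_card_filter_not P
  have hcast : ((2 * m).toNat : ℝ) ≤ 2 * t := by
    have : ((2 * m).toNat : ℤ) = 2 * m := Int.toNat_of_nonneg (by omega)
    have h2 : ((2 * m).toNat : ℝ) = 2 * (m : ℝ) := by exact_mod_cast this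
    linarith
  have h1 : (Fnear.card : ℝ) ≤ (A.card : ℝ) * (2 * t) := by
    calc (Fnear.card : ℝ) ≤ ((A.card * (2 * m).toNat : ℕ) : ℝ) := by
          exact_mod_cast le_trans hnear hIcard
      _ = (A.card : ℝ) * ((2 * m).toNat : ℝ) := by push_cast; ring
      _ ≤ (A.card : ℝ) * (2 * t) := by
          apply mul_le_mul_of_nonneg_left hcast (Nat.cast_nonneg _)
  have h2 : (Ffar.card : ℝ) ≤ (k : ℝ) - 1 := by
    have : Ffar.card + 1 ≤ k := hfar
    have := (Nat.cast_le (α := ℝ)).mpr this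
    push_cast at this
    linarith
  have h3 : (F.card : ℝ) = (Fnear.card : ℝ) + (Ffar.card : ℝ) := by
    exact_mod_cast hsplit.symm
  rw [h3]
  linarith
end

section
/- Let A' ⊆ A, B' ⊆ B, A' ⊆ B' be finite graphs (all induced subgraphs of a common graph) with B \ A = B' \ A' as vertex sets, and let λ be an equivalence relation on B \ A. Then v_λ(A',B') = v_λ(A,B), e_λ(A',B') ≤ e_λ(A,B), and hence w_λ(A',B') ≥ w_λ(A,B). Moreover, if there is no edge {x,y} with x ∈ A \ A' and y ∈ B' \ A', then all three quantities are equal. -/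
namespace ZeroOneLaw

variable {V : Type*}

theorem stmt18 {V : Type*} [Fintype V] (G : SimpleGraph V) (α : ℝ)
    (hirr : Irrational α) (h0 : 0 < α) (h1 : α < 1)
    (A A' B B' : Set V)
    (hA'A : A' ⊆ A) (hB'B : B' ⊆ B) (hA'B' : A' ⊆ B') (hAB : A ⊆ B)
    (hdiff : B \ A = B' \ A')
    (r : V → V → Prop) (hr : IsEquivOn r (B \ A)) :
    numClasses r = numClasses r ∧
      numEdges G A' B' r ≤ numEdges G A B r ∧
      weight G α A B r ≤ weight G α A' B' r ∧
      ((∀ x ∈ A \ A', ∀ y ∈ B' \ A', ¬ G.Adj x y) →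
        numEdges G A' B' r = numEdges G A B r ∧
          weight G α A' B' r = weight G α A B r) := by
  have hsub : ∀ e : Sym2 V, BadEdge G A' B' r e → BadEdge G A B r e := by
    rintro e ⟨he, hB', hnA', hcl⟩
    refine ⟨he, fun v hv => hB'B (hB' v hv), ?_, hcl⟩
    intro hall
    apply hnA'
    intro v hv
    by_contra hvA'
    have : v ∈ B' \ A' := ⟨hB' v hv, hvA'⟩
    rw [← hdiff] at this
    exact this.2 (hall v hv)
  have hle : numEdges G A' B' r ≤ numEdges G A B r := by
    apply Nat.card_le_card_of_injective
      (fun x : {e : Sym2 V // BadEdge G A' B' r e} => (⟨x.1, hsub x.1 x.2⟩ : {e : Sym2 V // BadEdge G A B r e}))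
    intro x y hxy
    simp only [Subtype.mk.injEq] at hxy
    exact Subtype.ext hxy
  refine ⟨rfl, hle, ?_, ?_⟩
  · unfold weight
    have : (numEdges G A' B' r : ℝ) ≤ (numEdges G A B r : ℝ) := by exact_mod_cast hle
    nlinarith
  · intro hno
    have hsub' : ∀ e : Sym2 V, BadEdge G A B r e → BadEdge G A' B' r e := by
      rintro e ⟨he, hB, hnA, hcl⟩
      refine ⟨he, ?_, ?_, hcl⟩
      · intro v hv
        by_cases hvA : v ∈ A
        · by_cases hvA' : v ∈ A'
          · exact hA'B' hvA'
          · -- v ∈ A \ A'; find the other vertex w ∉ A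
            exfalso
            push_neg at hnA
            obtain ⟨w, hw, hwA⟩ := hnA
            have hwBA : w ∈ B \ A := ⟨hB w hw, hwA⟩
            rw [hdiff] at hwBA
            -- v and w are the two vertices of e, adjacent
            induction e using Sym2.ind with
            | _ x y =>
              have hadj : G.Adj x y := he
              rcases Sym2.mem_iff.mp hv with rfl | rfl <;>
                rcases Sym2.mem_iff.mp hw with rfl | rfl
              · exact hwA hvA
              · exact hno _ ⟨hvA, hvA'⟩ _ hwBA hadj
              · exact hno _ ⟨hvA, hvA'⟩ _ hwBA hadj.symm
              · exact hwA hvA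
        · have : v ∈ B \ A := ⟨hB v hv, hvA⟩
          rw [hdiff] at this
          exact this.1
      · intro hall
        -- some vertex not in A, hence in B\A = B'\A', so not in A'
        push_neg at hnA
        obtain ⟨w, hw, hwA⟩ := hnA
        have hwBA : w ∈ B \ A := ⟨hB w hw, hwA⟩
        rw [hdiff] at hwBA
        exact hwBA.2 (hall w hw)
    have hce : numEdges G A' B' r = numEdges G A B r := by
      unfold numEdges
      exact Nat.card_congr (Equiv.subtypeEquivRight (fun e => ⟨hsub e, hsub' e⟩))
    refine ⟨hce, ?_⟩
    unfold weight
    rw [hce]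

end ZeroOneLaw
end
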